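/- arXiv:2406.19823 — 6 statements merged into one kernel-verified Lean document; each statement's English description precedes it below -/
import Mathlib

section
/- The number of (k,k)-overpartitions of n with exactly j overlined parts and m parts equals the number of k-partitions of n with exactly j overlined parts and m+(k-1)j parts. -/
noncomputable section

/-- The number of overlined parts of an overpartition (parts are pairs
(value, overlined?), collected into a multiset). -/
def olCount (π : Multiset (ℕ × Bool)) : ℕ := (π.filter (fun p => p.2 = true)).card

/-- The weight (sum of part values) of an overpartition. -/
def wt (π : Multiset (ℕ × Bool)) : ℕ := (π.map Prod.fst).sum

/-- An overpartition: all parts positive and each value has at most one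
overlined occurrence. -/
def IsOverMS (π : Multiset (ℕ × Bool)) : Prop :=
  (∀ p ∈ π, 0 < p.1) ∧ ∀ a : ℕ, π.count (a, true) ≤ 1
/-- A (k,k)-overpartition: an overpartition in which only parts divisible by
k may be overlined. -/
def IsKKOver (k : ℕ) (π : Multiset (ℕ × Bool)) : Prop :=
  IsOverMS π ∧ ∀ p ∈ π, p.2 = true → k ∣ p.1

/-- A k-partition: a partition in which the k-th occurrence of a part may be
overlined, i.e. each value has at most one overlined occurrence, and a value
with an overlined occurrence occurs at least k times in total. -/
def IsKPart (k : ℕ) (π : Multiset (ℕ × Bool)) : Prop :=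
  (∀ p ∈ π, 0 < p.1) ∧
    ∀ a : ℕ, π.count (a, true) ≤ 1 ∧ (π.count (a, true) = 1 → k ≤ π.count (a, false) + 1)

/- ### Auxiliary machinery: the dilation bijection -/

def gmap (k : ℕ) (p : ℕ × Bool) : Multiset (ℕ × Bool) :=
  if p.2 then (p.1 / k, true) ::ₘ Multiset.replicate (k - 1) (p.1 / k, false) else {p}

def fmap (k : ℕ) (π : Multiset (ℕ × Bool)) : Multiset (ℕ × Bool) := π.bind (gmap k)

lemma olCount_add (s t : Multiset (ℕ × Bool)) : olCount (s + t) = olCount s + olCount t := by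
  simp [olCount]

lemma wt_add (s t : Multiset (ℕ × Bool)) : wt (s + t) = wt s + wt t := by simp [wt]

lemma fmap_cons (k : ℕ) (p : ℕ × Bool) (π : Multiset (ℕ × Bool)) :
    fmap k (p ::ₘ π) = gmap k p + fmap k π := by simp [fmap]

lemma olCount_cons (p : ℕ × Bool) (s : Multiset (ℕ × Bool)) :
    olCount (p ::ₘ s) = (if p.2 then 1 else 0) + olCount s := by
  simp only [olCount, Multiset.filter_cons]
  cases h : p.2 <;> simp [h] <;> omega

lemma filter_true_replicate (n : ℕ) (x : ℕ) :
    Multiset.filter (fun p : ℕ × Bool => p.2 = true) (Multiset.replicate n (x, false)) = 0 := by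
  rw [Multiset.filter_eq_nil]
  intro q hq
  rw [Multiset.eq_of_mem_replicate hq]
  simp

lemma card_fmap (k : ℕ) (π : Multiset (ℕ × Bool)) :
    Multiset.card (fmap k π) = Multiset.card π + (k - 1) * olCount π := by
  induction π using Multiset.induction_on with
  | empty => simp [fmap, olCount]
  | cons p π ih =>
    rw [fmap_cons, Multiset.card_add, ih, olCount_cons]
    cases h : p.2 <;> simp [gmap, h] <;> ring_nf <;> omega

lemma olCount_fmap (k : ℕ) (π : Multiset (ℕ × Bool)) :
    olCount (fmap k π) = olCount π := by
  induction π using Multiset.induction_on with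
  | empty => simp [fmap, olCount]
  | cons p π ih =>
    rw [fmap_cons, olCount_add, ih, olCount_cons]
    cases h : p.2 <;>
      simp [gmap, h, olCount, Multiset.filter_cons, filter_true_replicate,
        Multiset.filter_singleton]

lemma wt_fmap (k : ℕ) (hk : 0 < k) (π : Multiset (ℕ × Bool))
    (hdiv : ∀ p ∈ π, p.2 = true → k ∣ p.1) : wt (fmap k π) = wt π := by
  induction π using Multiset.induction_on with
  | empty => simp [fmap, wt]
  | cons p π ih =>
    rw [fmap_cons, wt_add, ih (fun q hq => hdiv q (Multiset.mem_cons_of_mem hq))]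
    cases h : p.2
    · simp [gmap, h, wt]
    · have hd : k ∣ p.1 := hdiv p (Multiset.mem_cons_self _ _) h
      have h1 : p.1 / k * k = p.1 := Nat.div_mul_cancel hd
      have h2 : p.1 / k + (k - 1) * (p.1 / k) = p.1 := by
        have : p.1 / k + (k - 1) * (p.1 / k) = (1 + (k - 1)) * (p.1 / k) := by ring
        rw [this, show 1 + (k - 1) = k by omega, Nat.mul_comm, h1]
      simp [gmap, h, wt, Multiset.sum_replicate]
      omega

lemma count_true_fmap (k : ℕ) (hk : 0 < k) (π : Multiset (ℕ × Bool))
    (hdiv : ∀ p ∈ π, p.2 = true → k ∣ p.1) (b : ℕ) :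
    (fmap k π).count (b, true) = π.count (k * b, true) := by
  induction π using Multiset.induction_on with
  | empty => simp [fmap]
  | cons p π ih =>
    rw [fmap_cons, Multiset.count_add, ih (fun q hq => hdiv q (Multiset.mem_cons_of_mem hq)),
      Multiset.count_cons]
    obtain ⟨a, bb⟩ := p
    cases bb
    · simp [gmap]
    · have hd : k ∣ a := hdiv (a, true) (Multiset.mem_cons_self _ _) rfl
      have key : (b = a / k) ↔ (k * b = a) := by
        constructor
        · rintro rfl; exact Nat.mul_div_cancel' hd
        · rintro rfl; rw [Nat.mul_div_cancel_left _ hk]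
      simp only [gmap, if_pos, Multiset.count_cons, Multiset.count_replicate]
      rcases eq_or_ne b (a / k) with he | he
      · subst he
        have ha : k * (a / k) = a := key.mp rfl
        simp [ha]
        omega
      · have h2 : k * b ≠ a := fun hc => he (key.mpr hc)
        simp [he, Ne.symm he, h2, Prod.ext_iff]

lemma count_false_fmap (k : ℕ) (hk : 0 < k) (π : Multiset (ℕ × Bool))
    (hdiv : ∀ p ∈ π, p.2 = true → k ∣ p.1) (b : ℕ) :
    (fmap k π).count (b, false) = π.count (b, false) + (k - 1) * π.count (k * b, true) := by
  induction π using Multiset.induction_on with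
  | empty => simp [fmap]
  | cons p π ih =>
    rw [fmap_cons, Multiset.count_add, ih (fun q hq => hdiv q (Multiset.mem_cons_of_mem hq)),
      Multiset.count_cons, Multiset.count_cons]
    obtain ⟨a, bb⟩ := p
    cases bb
    · simp only [gmap, if_neg, Multiset.count_singleton]
      rcases eq_or_ne b a with he | he <;> simp [he, Prod.ext_iff] <;> ring
    · have hd : k ∣ a := hdiv (a, true) (Multiset.mem_cons_self _ _) rfl
      have key : (b = a / k) ↔ (k * b = a) := by
        constructor
        · rintro rfl; exact Nat.mul_div_cancel' hd
        · rintro rfl; rw [Nat.mul_div_cancel_left _ hk]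
      simp only [gmap, if_pos, Multiset.count_cons, Multiset.count_replicate]
      rcases eq_or_ne b (a / k) with he | he
      · subst he
        have ha : k * (a / k) = a := key.mp rfl
        simp [ha]
        ring
      · have h2 : k * b ≠ a := fun hc => he (key.mpr hc)
        simp [he, Ne.symm he, h2, Prod.ext_iff]

lemma count_map_fst_filter (σ : Multiset (ℕ × Bool)) (a : ℕ) :
    ((σ.filter fun p => p.2 = true).map Prod.fst).count a = σ.count (a, true) := by
  induction σ using Multiset.induction_on with
  | empty => simp
  | cons p s ih =>
    obtain ⟨x, bb⟩ := p
    cases bb <;>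
      simp [Multiset.filter_cons, Multiset.count_cons, ih, Prod.ext_iff]

lemma count_bind_rep_false (k : ℕ) (T : Multiset ℕ) (b : ℕ) :
    (T.bind fun a => Multiset.replicate (k-1) (a, false)).count (b, false) = (k-1) * T.count b := by
  induction T using Multiset.induction_on with
  | empty => simp
  | cons a T ih =>
    rw [Multiset.cons_bind, Multiset.count_add, ih, Multiset.count_replicate, Multiset.count_cons]
    rcases eq_or_ne b a with he | he
    · simp [he]; ring
    · simp [he, Ne.symm he, Prod.ext_iff]

lemma count_bind_rep_true (k : ℕ) (T : Multiset ℕ) (b : ℕ) :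
    (T.bind fun a => Multiset.replicate (k-1) (a, false)).count (b, true) = 0 := by
  rw [Multiset.count_eq_zero]
  intro h
  obtain ⟨a, _, hmem⟩ := Multiset.mem_bind.mp h
  have := Multiset.eq_of_mem_replicate hmem
  simp at this

lemma inj_kmul (k : ℕ) (hk : 0 < k) :
    Function.Injective (fun a : ℕ => ((k * a, true) : ℕ × Bool)) := by
  intro a b hab
  simp only [Prod.mk.injEq] at hab
  exact Nat.eq_of_mul_eq_mul_left hk hab.1

/-- the number of (k,k)-overpartitions of n with exactly j
overlined parts and m parts equals the number of k-partitions of n with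
exactly j overlined parts and m + (k-1)j parts. -/
theorem stmt0 (k j m n : ℕ) (hk : 0 < k) :
    {π : Multiset (ℕ × Bool) |
        IsKKOver k π ∧ Multiset.card π = m ∧ olCount π = j ∧ wt π = n}.ncard =
      {π : Multiset (ℕ × Bool) |
        IsKPart k π ∧ Multiset.card π = m + (k - 1) * j ∧ olCount π = j ∧ wt π = n}.ncard := by
  classical
  set S1 := {π : Multiset (ℕ × Bool) |
      IsKKOver k π ∧ Multiset.card π = m ∧ olCount π = j ∧ wt π = n} with hS1
  set S2 := {π : Multiset (ℕ × Bool) |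
      IsKPart k π ∧ Multiset.card π = m + (k - 1) * j ∧ olCount π = j ∧ wt π = n} with hS2
  -- forward: fmap maps S1 into S2
  have hmaps : ∀ π ∈ S1, fmap k π ∈ S2 := by
    rintro π ⟨⟨⟨hpos, hcnt⟩, hdiv⟩, hcard, hol, hwt⟩
    refine ⟨⟨?_, ?_⟩, ?_, ?_, ?_⟩
    · intro p hp
      obtain ⟨q, hq, hpg⟩ := Multiset.mem_bind.mp hp
      cases hq2 : q.2
      · rw [gmap, hq2] at hpg
        simp only [Bool.false_eq_true, if_false, Multiset.mem_singleton] at hpg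
        subst hpg; exact hpos _ hq
      · rw [gmap, hq2] at hpg
        simp only [if_true, Multiset.mem_cons] at hpg
        have hq1 : 0 < q.1 / k :=
          Nat.div_pos (Nat.le_of_dvd (hpos q hq) (hdiv q hq hq2)) hk
        rcases hpg with rfl | hpg
        · exact hq1
        · rw [Multiset.eq_of_mem_replicate hpg]; exact hq1
    · intro a
      have ht := count_true_fmap k hk π hdiv a
      have hf := count_false_fmap k hk π hdiv a
      constructor
      · rw [ht]; exact hcnt (k * a)
      · intro h1
        rw [ht] at h1
        rw [hf, h1, mul_one]
        omega
    · rw [card_fmap, hcard, hol]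
    · rw [olCount_fmap, hol]
    · rw [wt_fmap k hk π hdiv, hwt]
  -- injectivity on S1
  have hinj : Set.InjOn (fmap k) S1 := by
    rintro π₁ ⟨⟨⟨_, _⟩, hdiv₁⟩, _, _, _⟩ π₂ ⟨⟨⟨_, _⟩, hdiv₂⟩, _, _, _⟩ heq
    have htrue : ∀ b, π₁.count (b, true) = π₂.count (b, true) := by
      intro b
      by_cases hb : k ∣ b
      · obtain ⟨c, rfl⟩ := hb
        rw [← count_true_fmap k hk π₁ hdiv₁ c, ← count_true_fmap k hk π₂ hdiv₂ c, heq]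
      · rw [Multiset.count_eq_zero.mpr (fun hmem => hb (hdiv₁ _ hmem rfl)),
          Multiset.count_eq_zero.mpr (fun hmem => hb (hdiv₂ _ hmem rfl))]
    rw [Multiset.ext]
    rintro ⟨b, bb⟩
    cases bb
    · have hT : π₁.count (k * b, true) = π₂.count (k * b, true) := htrue (k * b)
      have h5 : π₁.count (b, false) + (k - 1) * π₁.count (k * b, true) =
          π₂.count (b, false) + (k - 1) * π₂.count (k * b, true) := by
        rw [← count_false_fmap k hk π₁ hdiv₁ b, ← count_false_fmap k hk π₂ hdiv₂ b, heq]
      rw [hT] at h5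
      exact Nat.add_right_cancel h5
    · exact htrue b
  -- surjectivity: S2 ⊆ image
  have himg : S2 = fmap k '' S1 := by
    ext σ
    constructor
    · rintro ⟨⟨hpos, hcnt⟩, hcard, hol, hwt⟩
      set T : Multiset ℕ := (σ.filter fun p => p.2 = true).map Prod.fst with hT
      set π : Multiset (ℕ × Bool) :=
        (σ.filter (fun p => p.2 = false) - T.bind fun a => Multiset.replicate (k-1) (a, false))
          + T.map fun a => (k*a, true) with hπ
      have hTc : ∀ a, T.count a = σ.count (a, true) := fun a => count_map_fst_filter σ a
      have hle : ∀ b, (k-1) * σ.count (b, true) ≤ σ.count (b, false) := by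
        intro b
        rcases Nat.le_one_iff_eq_zero_or_eq_one.mp (hcnt b).1 with h | h
        · simp [h]
        · rw [h, mul_one]
          have := (hcnt b).2 h
          omega
      have hmap0 : ∀ b, (Multiset.map (fun a => ((k*a, true) : ℕ × Bool)) T).count (b, false) = 0 := by
        intro b
        rw [Multiset.count_eq_zero]
        intro hm
        obtain ⟨a, _, ha⟩ := Multiset.mem_map.mp hm
        simp at ha
      have hπf : ∀ b, π.count (b, false) = σ.count (b, false) - (k-1) * σ.count (b, true) := by
        intro b
        rw [hπ, Multiset.count_add, Multiset.count_sub, count_bind_rep_false, hTc,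
          hmap0, Multiset.count_filter]
        simp
      have hπt : ∀ b, π.count (k * b, true) = σ.count (b, true) := by
        intro b
        have hcm := Multiset.count_map_eq_count' (fun a => ((k*a, true) : ℕ × Bool)) T
          (inj_kmul k hk) b
        rw [hπ, Multiset.count_add, Multiset.count_sub, count_bind_rep_true, hcm, hTc,
          Multiset.count_filter]
        simp
      have hdivπ : ∀ p ∈ π, p.2 = true → k ∣ p.1 := by
        intro p hp hpt
        rw [hπ] at hp
        rcases Multiset.mem_add.mp hp with h | h
        · have h2 := (Multiset.mem_filter.mp (Multiset.mem_of_le tsub_le_self h)).2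
          rw [hpt] at h2; simp at h2
        · obtain ⟨a, _, rfl⟩ := Multiset.mem_map.mp h
          exact dvd_mul_right k a
      have hposπ : ∀ p ∈ π, 0 < p.1 := by
        intro p hp
        rw [hπ] at hp
        rcases Multiset.mem_add.mp hp with h | h
        · exact hpos p (Multiset.mem_of_mem_filter (Multiset.mem_of_le tsub_le_self h))
        · obtain ⟨a, haT, rfl⟩ := Multiset.mem_map.mp h
          obtain ⟨q, hqf, hqa⟩ := Multiset.mem_map.mp haT
          have hq2 := (Multiset.mem_filter.mp hqf).2
          have hq1 := hpos q (Multiset.mem_of_mem_filter hqf)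
          have : 0 < a := by rw [← hqa]; exact hq1
          exact Nat.mul_pos hk this
      have hcntπ : ∀ a, π.count (a, true) ≤ 1 := by
        intro a
        by_cases hd : k ∣ a
        · obtain ⟨c, rfl⟩ := hd
          rw [hπt c]; exact (hcnt c).1
        · rw [Multiset.count_eq_zero.mpr (fun hmem => hd (hdivπ _ hmem rfl))]
          omega
      have hfeq : fmap k π = σ := by
        rw [Multiset.ext]
        rintro ⟨b, bb⟩
        cases bb
        · rw [count_false_fmap k hk π hdivπ, hπf b, hπt b]
          exact Nat.sub_add_cancel (hle b)
        · rw [count_true_fmap k hk π hdivπ, hπt b]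
      have holπ : olCount π = j := by
        rw [← olCount_fmap k π, hfeq, hol]
      have hwtπ : wt π = n := by
        rw [← wt_fmap k hk π hdivπ, hfeq, hwt]
      have hcardπ : Multiset.card π = m := by
        have h1 := card_fmap k π
        rw [hfeq, hcard, holπ] at h1
        exact (Nat.add_right_cancel h1.symm)
      exact ⟨π, ⟨⟨⟨hposπ, hcntπ⟩, hdivπ⟩, hcardπ, holπ, hwtπ⟩, hfeq⟩
    · rintro ⟨π, hπ, rfl⟩
      exact hmaps π hπ
  rw [himg]
  exact (Set.ncard_image_of_injOn hinj).symm
end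
end

section
/- The generating function for k-partitions, counting overlined parts by x, total parts by z, and weight by q, equals (-x z^k q^k; q^k)_∞ / (zq; q)_∞. -/
/-!
A k-partition is determined by the state of each part size `a ≥ 1`: the number `j` of plain copies
of `a` beyond those forced by an overline, and whether its `k`-th copy is overlined. The parts of
size `a` therefore contribute
`∑ⱼ (z q^a)^j (1 + x z^k q^(k a)) = (1 + x z^k q^(k a)) / (1 - z q^a)`,
and the generating function is the product of these local factors. Modulo `q^(m+1)` only parts and
multiplicities up to `m` matter, so the identity reduces to a finite one, and the infinite sum and
products exist because every coefficient stabilises.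
-/

noncomputable section

/-- The q-Pochhammer symbol (q^t; q^t)_n as a polynomial in q. -/
def qpoch (t n : ℕ) : Polynomial ℚ :=
  ∏ i ∈ Finset.range n, (1 - Polynomial.X ^ (t * (i + 1)))

/-- The Gaussian binomial coefficient [A choose B] in base q^t:
(q^t;q^t)_A / ((q^t;q^t)_B (q^t;q^t)_{A-B}) when 0 ≤ B ≤ A, and 0 otherwise. -/
def gauss (t : ℕ) (A B : ℤ) : Polynomial ℚ :=
  if 0 ≤ B ∧ B ≤ A then
    qpoch t A.toNat / (qpoch t B.toNat * qpoch t (A - B).toNat)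
  else 0
/-- Formal power series in three variables x/μ = X 0, z/ν = X 1, q = X 2. -/
abbrev S3 := MvPowerSeries (Fin 3) ℚ

/-- Product topology with discrete coefficients, so that infinite sums and
products of power series are meaningful. -/
instance : TopologicalSpace S3 :=
  @Pi.topologicalSpace ((Fin 3) →₀ ℕ) (fun _ => ℚ) (fun _ => ⊥)

/-- Interpret a polynomial in q as a power series in the variable X 2. -/
def pq (p : Polynomial ℚ) : S3 := Polynomial.aeval (MvPowerSeries.X 2 : S3) p
namespace KPartition

open MvPowerSeries Finset Filter Topology

section SModEq

variable {R M ι : Type*} [CommRing R]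

theorem sum_smodEq_sum_of_subset [AddCommGroup M] [Module R M] {U : Submodule R M}
    {s t : Finset ι} {f : ι → M} (hst : s ⊆ t) (hf : ∀ i ∈ t, i ∉ s → f i ≡ 0 [SMOD U]) :
    ∑ i ∈ t, f i ≡ ∑ i ∈ s, f i [SMOD U] := by
  classical
  rw [← sum_sdiff hst]
  have hsdiff : ∀ i ∈ t \ s, f i ≡ 0 [SMOD U] := fun i hi =>
    hf i (mem_sdiff.mp hi).1 (mem_sdiff.mp hi).2
  simpa using (SModEq.sum hsdiff).add (SModEq.refl (∑ i ∈ s, f i))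

theorem prod_smodEq_prod_of_subset {I : Ideal R} {s t : Finset ι} {f : ι → R} (hst : s ⊆ t)
    (hf : ∀ i ∈ t, i ∉ s → f i ≡ 1 [SMOD I]) : ∏ i ∈ t, f i ≡ ∏ i ∈ s, f i [SMOD I] := by
  classical
  rw [← prod_sdiff hst]
  have hsdiff : ∀ i ∈ t \ s, f i ≡ 1 [SMOD I] := fun i hi =>
    hf i (mem_sdiff.mp hi).1 (mem_sdiff.mp hi).2
  simpa using (SModEq.prod hsdiff).mul (SModEq.refl (∏ i ∈ s, f i))

end SModEq

abbrev qIdeal (m : ℕ) : Ideal S3 := Ideal.span {X 2 ^ (m + 1)}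

theorem smodEq_qIdeal_iff {m : ℕ} {P Q : S3} :
    P ≡ Q [SMOD qIdeal m] ↔ ∀ d : Fin 3 →₀ ℕ, d 2 ≤ m → coeff d P = coeff d Q := by
  simp [SModEq.sub_mem, Ideal.mem_span_singleton, X_pow_dvd_iff, sub_eq_zero]

theorem smodEq_qIdeal_of_dvd_sub {m : ℕ} {P Q : S3} (h : X 2 ^ (m + 1) ∣ P - Q) :
    P ≡ Q [SMOD qIdeal m] :=
  SModEq.sub_mem.mpr (Ideal.mem_span_singleton.mpr h)

theorem isUnit_of_smodEq_one {P : S3} (h : P ≡ 1 [SMOD qIdeal 0]) : IsUnit P := by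
  rw [isUnit_iff_constantCoeff, ← coeff_zero_eq_constantCoeff_apply,
    smodEq_qIdeal_iff.mp h 0 le_rfl, coeff_zero_one]
  exact isUnit_one

theorem eq_of_forall_smodEq_qIdeal {P Q : S3} (h : ∀ m, P ≡ Q [SMOD qIdeal m]) : P = Q := by
  ext d
  exact smodEq_qIdeal_iff.mp (h (d 2)) d le_rfl

instance : T2Space S3 := by
  -- the topology of `S3` is the product of discrete topologies on `ℚ`, not of its usual one
  let : TopologicalSpace ℚ := ⊥
  have : DiscreteTopology ℚ := ⟨rfl⟩
  exact Pi.t2Space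

theorem tendsto_of_forall_smodEq {ι : Type*} {l : Filter ι} {f : ι → S3} {g : S3}
    (h : ∀ m, ∀ᶠ i in l, f i ≡ g [SMOD qIdeal m]) : Tendsto f l (𝓝 g) := by
  let : TopologicalSpace ℚ := ⊥
  have : DiscreteTopology ℚ := ⟨rfl⟩
  refine tendsto_pi_nhds.mpr fun d => ?_
  rw [nhds_discrete, tendsto_pure]
  exact (h (d 2)).mono fun i hi => smodEq_qIdeal_iff.mp hi d le_rfl

theorem exists_tendsto_of_forall_smodEq {ι : Type*} {l : Filter ι} [l.NeBot] {f : ι → S3}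
    {G : ℕ → S3} (h : ∀ m, ∀ᶠ i in l, f i ≡ G m [SMOD qIdeal m]) :
    ∃ g, Tendsto f l (𝓝 g) ∧ ∀ m, g ≡ G m [SMOD qIdeal m] := by
  let g : S3 := fun d => coeff d (G (d 2))
  have hg : ∀ m, g ≡ G m [SMOD qIdeal m] := by
    refine fun m => smodEq_qIdeal_iff.mpr fun d hd => ?_
    obtain ⟨i, hi, him⟩ := ((h (d 2)).and (h m)).exists
    exact (smodEq_qIdeal_iff.mp hi d le_rfl).symm.trans (smodEq_qIdeal_iff.mp him d hd)
  exact ⟨g, tendsto_of_forall_smodEq fun m => (h m).mono fun i hi => hi.trans (hg m).symm, hg⟩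

theorem exists_hasSum_of_smodEq_zero {ι : Type*} {f : ι → S3} (T : ℕ → Finset ι)
    (hf : ∀ m i, i ∉ T m → f i ≡ 0 [SMOD qIdeal m]) :
    ∃ g, HasSum f g ∧ ∀ m, g ≡ ∑ i ∈ T m, f i [SMOD qIdeal m] :=
  exists_tendsto_of_forall_smodEq fun m => (eventually_ge_atTop (T m)).mono fun _ hs =>
    sum_smodEq_sum_of_subset hs fun i _ hi => hf m i hi

theorem exists_hasProd_of_smodEq_one {f : ℕ → S3} (hf : ∀ m i, m ≤ i → f i ≡ 1 [SMOD qIdeal m]) :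
    ∃ g, HasProd f g ∧ ∀ m, g ≡ ∏ i ∈ range m, f i [SMOD qIdeal m] :=
  exists_tendsto_of_forall_smodEq fun m => (eventually_ge_atTop (range m)).mono fun _ hs =>
    prod_smodEq_prod_of_subset hs fun i _ hi => hf m i (by simpa using hi)

def partMonomial (π : Multiset (ℕ × Bool)) : S3 :=
  X 0 ^ olCount π * X 1 ^ Multiset.card π * X 2 ^ wt π

theorem partMonomial_add (π ρ : Multiset (ℕ × Bool)) :
    partMonomial (π + ρ) = partMonomial π * partMonomial ρ := by
  simp only [partMonomial, olCount, wt, Multiset.filter_add, Multiset.map_add, Multiset.sum_add,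
    Multiset.card_add, pow_add]
  ring

theorem partMonomial_sum {ι : Type*} (s : Finset ι) (π : ι → Multiset (ℕ × Bool)) :
    partMonomial (∑ i ∈ s, π i) = ∏ i ∈ s, partMonomial (π i) := by
  classical
  induction s using Finset.induction with
  | empty => simp [partMonomial, olCount, wt]
  | insert i s hi ih => rw [sum_insert hi, prod_insert hi, partMonomial_add, ih]

theorem partMonomial_replicate (n a : ℕ) (b : Bool) :
    partMonomial (Multiset.replicate n (a, b)) = ((X 0) ^ b.toNat * X 1 * X 2 ^ a) ^ n := by
  have hol : olCount (Multiset.replicate n (a, b)) = b.toNat * n := by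
    cases b
    · simp [olCount, Multiset.filter_eq_nil, Multiset.mem_replicate]
    · simp [olCount, Multiset.filter_eq_self.mpr, Multiset.mem_replicate]
  simp only [partMonomial, hol, wt, Multiset.card_replicate, Multiset.map_replicate,
    Multiset.sum_replicate, smul_eq_mul, mul_pow, ← pow_mul]
  ring

theorem partMonomial_smodEq_zero {m : ℕ} {π : Multiset (ℕ × Bool)} (h : m < wt π) :
    partMonomial π ≡ 0 [SMOD qIdeal m] :=
  smodEq_qIdeal_of_dvd_sub (by simpa [partMonomial] using Dvd.dvd.mul_left (pow_dvd_pow _ h) _)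

theorem card_le_wt {π : Multiset (ℕ × Bool)} (h : ∀ p ∈ π, 0 < p.1) : Multiset.card π ≤ wt π := by
  simpa [wt] using Multiset.card_nsmul_le_sum (s := π.map Prod.fst) (a := 1)
    (by simpa only [Multiset.mem_map, forall_exists_index, and_imp, forall_apply_eq_imp_iff₂])

theorem le_wt_of_mem {π : Multiset (ℕ × Bool)} {p : ℕ × Bool} (h : p ∈ π) : p.1 ≤ wt π :=
  Multiset.le_sum_of_mem (Multiset.mem_map_of_mem _ h)

abbrev KPart (k : ℕ) := {π : Multiset (ℕ × Bool) // IsKPart k π}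

section States

variable (k : ℕ)

/-- The parts of size `a` of a k-partition in the state `c`: `c.1` plain copies of `a`, and if `c.2`
also an overlined copy together with the `k - 1` plain copies it requires. -/
def block (a : ℕ) (c : ℕ × Bool) : Multiset (ℕ × Bool) :=
  Multiset.replicate (c.1 + (k - 1) * c.2.toNat) (a, false) +
    Multiset.replicate c.2.toNat (a, true)

variable {k}

theorem fst_eq_of_mem_block {a : ℕ} {c : ℕ × Bool} {p : ℕ × Bool} (h : p ∈ block k a c) :
    p.1 = a := by
  rcases Multiset.mem_add.mp h with h | h <;> simp [(Multiset.eq_of_mem_replicate h)]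

theorem count_block (a : ℕ) (c : ℕ × Bool) (b : Bool) :
    (block k a c).count (a, b) = if b then c.2.toNat else c.1 + (k - 1) * c.2.toNat := by
  cases b <;> simp [block, Multiset.count_replicate]

theorem partMonomial_block (hk : 0 < k) (a : ℕ) (c : ℕ × Bool) :
    partMonomial (block k a c) =
      (X 1 * X 2 ^ a) ^ c.1 * (X 0 * X 1 ^ k * X 2 ^ (k * a)) ^ c.2.toNat := by
  obtain ⟨k, rfl⟩ := Nat.exists_eq_add_one_of_ne_zero hk.ne'
  rcases c with ⟨j, _ | _⟩ <;>
    simp only [block, partMonomial_add, partMonomial_replicate, Bool.toNat_false, Bool.toNat_true,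
      Nat.add_sub_cancel] <;> ring

variable (k) in
def ofStates {m : ℕ} (c : Fin m → ℕ × Bool) : Multiset (ℕ × Bool) :=
  ∑ i : Fin m, block k (i + 1) (c i)

theorem exists_eq_of_mem_ofStates {m : ℕ} {c : Fin m → ℕ × Bool} {p : ℕ × Bool}
    (h : p ∈ ofStates k c) : ∃ i : Fin m, p.1 = i + 1 := by
  obtain ⟨i, -, hi⟩ := Multiset.mem_sum.mp h
  exact ⟨i, fst_eq_of_mem_block hi⟩

theorem count_ofStates {m : ℕ} (c : Fin m → ℕ × Bool) (i : Fin m) (b : Bool) :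
    (ofStates k c).count ((i : ℕ) + 1, b) =
      if b then (c i).2.toNat else (c i).1 + (k - 1) * (c i).2.toNat := by
  rw [ofStates, Multiset.count_sum', sum_eq_single i, count_block]
  · refine fun j _ hji => Multiset.count_eq_zero.mpr fun h => hji ?_
    exact Fin.ext (by simpa using (fst_eq_of_mem_block h).symm)
  · simp

theorem isKPart_ofStates {m : ℕ} (c : Fin m → ℕ × Bool) : IsKPart k (ofStates k c) := by
  refine ⟨fun p hp => ?_, fun a => ?_⟩
  · obtain ⟨i, hi⟩ := exists_eq_of_mem_ofStates hp
    omega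
  by_cases ha : ∃ i : Fin m, a = i + 1
  · obtain ⟨i, rfl⟩ := ha
    rw [count_ofStates, count_ofStates]
    cases (c i).2 <;> simp
    omega
  · have : (a, true) ∉ ofStates k c := fun h => ha (exists_eq_of_mem_ofStates h)
    simp [Multiset.count_eq_zero.mpr this]

variable (k) in
def states (m : ℕ) (π : Multiset (ℕ × Bool)) (i : Fin m) : ℕ × Bool :=
  if ((i : ℕ) + 1, true) ∈ π then (π.count ((i : ℕ) + 1, false) - (k - 1), true)
  else (π.count ((i : ℕ) + 1, false), false)

theorem states_ofStates {m : ℕ} (c : Fin m → ℕ × Bool) : states k m (ofStates k c) = c := by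
  funext i
  simp only [states, ← Multiset.count_pos, count_ofStates]
  obtain ⟨j, _ | _⟩ := c i <;> simp

theorem ofStates_states {m : ℕ} {π : Multiset (ℕ × Bool)} (hπ : IsKPart k π)
    (hm : ∀ p ∈ π, p.1 ≤ m) : ofStates k (states k m π) = π := by
  ext ⟨a, b⟩
  by_cases ha : ∃ i : Fin m, a = i + 1
  · obtain ⟨i, rfl⟩ := ha
    obtain ⟨hle, hk⟩ := hπ.2 ((i : ℕ) + 1)
    simp only [count_ofStates, states, ← Multiset.count_pos]
    by_cases h : 0 < π.count ((i : ℕ) + 1, true) <;> cases b <;> simp [h] <;> omega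
  · have hout : ∀ b', (a, b') ∉ π := fun b' h => by
      have hpos := hπ.1 _ h
      have hle := hm _ h
      exact ha ⟨⟨a - 1, by omega⟩, (Nat.sub_add_cancel hpos).symm⟩
    have : (a, b) ∉ ofStates k (states k m π) := fun h => ha (exists_eq_of_mem_ofStates h)
    rw [Multiset.count_eq_zero.mpr this, Multiset.count_eq_zero.mpr (hout b)]

def stateBox (m : ℕ) : Finset (Fin m → ℕ × Bool) :=
  Fintype.piFinset fun _ => range (m + 1) ×ˢ univ

theorem states_mem_stateBox {m : ℕ} {π : Multiset (ℕ × Bool)} (hπ : IsKPart k π)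
    (hw : wt π ≤ m) : states k m π ∈ stateBox m := by
  refine Fintype.mem_piFinset.mpr fun i => ?_
  have hcount : ∀ p, π.count p ≤ m := fun p =>
    (Multiset.count_le_card p π).trans ((card_le_wt hπ.1).trans hw)
  unfold states
  split_ifs <;> simp [hcount, (Nat.sub_le _ _).trans (hcount _)]

variable (k) in
/-- A k-partition of weight at most `m` has parts and multiplicities at most `m`, so it is
`ofStates` of a state in `stateBox m`. -/
def lowWeight (m : ℕ) : Finset (KPart k) :=
  ((stateBox m).image fun c => ⟨ofStates k c, isKPart_ofStates c⟩).filter (wt ·.1 ≤ m)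

theorem mem_lowWeight {m : ℕ} {π : KPart k} : π ∈ lowWeight k m ↔ wt π.1 ≤ m := by
  refine ⟨fun h => (mem_filter.mp h).2, fun hw => mem_filter.mpr ⟨mem_image.mpr ?_, hw⟩⟩
  refine ⟨states k m π.1, states_mem_stateBox π.2 hw, Subtype.ext (ofStates_states π.2 ?_)⟩
  exact fun p hp => (le_wt_of_mem hp).trans hw

theorem sum_stateBox_smodEq (m : ℕ) :
    ∑ c ∈ stateBox m, partMonomial (ofStates k c) ≡
      ∑ π ∈ lowWeight k m, partMonomial π.1 [SMOD qIdeal m] := by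
  have hinj : Set.InjOn (fun c : Fin m → ℕ × Bool => (⟨ofStates k c, isKPart_ofStates c⟩ : KPart k))
      (stateBox m) := fun c _ c' _ h => by
    simpa [states_ofStates] using congrArg (states k m ∘ Subtype.val) h
  rw [← sum_image (f := fun π : KPart k => partMonomial π.1) hinj]
  refine sum_smodEq_sum_of_subset (filter_subset _ _) fun π _ hπ => ?_
  exact partMonomial_smodEq_zero (not_le.mp (mem_lowWeight.not.mp hπ))

theorem sum_block_eq (hk : 0 < k) (m a : ℕ) :
    ∑ c ∈ range (m + 1) ×ˢ univ, partMonomial (block k a c) =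
      (∑ j ∈ range (m + 1), (X 1 * X 2 ^ a) ^ j) * (1 + X 0 * X 1 ^ k * X 2 ^ (k * a)) := by
  simp only [sum_product, Fintype.sum_bool, partMonomial_block hk, Bool.toNat_true,
    Bool.toNat_false, pow_one, pow_zero, mul_one, sum_add_distrib, ← sum_mul]
  ring

theorem sum_block_mul_smodEq (hk : 0 < k) {m a : ℕ} (ha : 0 < a) :
    (∑ c ∈ range (m + 1) ×ˢ univ, partMonomial (block k a c)) * (1 - X 1 * X 2 ^ a) ≡
      1 + X 0 * X 1 ^ k * X 2 ^ (k * a) [SMOD qIdeal m] := by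
  have hdvd : X 2 ^ (m + 1) ∣ (X 1 * X 2 ^ a : S3) ^ (m + 1) := by
    rw [mul_pow, ← pow_mul]
    exact Dvd.dvd.mul_left (pow_dvd_pow _ (by nlinarith)) _
  apply smodEq_qIdeal_of_dvd_sub
  rw [sum_block_eq hk, mul_right_comm, geom_sum_mul_neg, one_sub_mul, sub_sub_cancel_left]
  exact (hdvd.mul_right _).neg_right

theorem prod_sum_block (m : ℕ) :
    ∏ i : Fin m, ∑ c ∈ range (m + 1) ×ˢ univ, partMonomial (block k (i + 1) c) =
      ∑ c ∈ stateBox m, partMonomial (ofStates k c) := by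
  simp only [prod_univ_sum, ofStates, partMonomial_sum, stateBox]

theorem sum_lowWeight_mul_prod_smodEq (hk : 0 < k) (m : ℕ) :
    (∑ π ∈ lowWeight k m, partMonomial π.1) * ∏ i ∈ range m, (1 - X 1 * X 2 ^ (i + 1)) ≡
      ∏ i ∈ range m, (1 + X 0 * X 1 ^ k * X 2 ^ (k * (i + 1))) [SMOD qIdeal m] := by
  refine ((sum_stateBox_smodEq m).symm.mul SModEq.rfl).trans ?_
  rw [← prod_sum_block, prod_range, prod_range, ← prod_mul_distrib]
  exact SModEq.prod fun i _ => sum_block_mul_smodEq hk i.val.succ_pos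

end States

end KPartition

open KPartition

open MvPowerSeries in
/-- the generating function for k-partitions, with x = X 0 counting
overlined parts, z = X 1 counting parts and q = X 2 the weight, equals
(-x z^k q^k; q^k)_∞ / (zq; q)_∞. -/
theorem stmt2 (k : ℕ) (hk : 0 < k) :
    ∑' π : {π : Multiset (ℕ × Bool) // IsKPart k π},
        (X 0 : S3) ^ olCount π.1 * (X 1 : S3) ^ Multiset.card π.1 * (X 2 : S3) ^ wt π.1 =
      (∏' i : ℕ, (1 + (X 0 : S3) * (X 1 : S3) ^ k * (X 2 : S3) ^ (k * (i + 1)))) *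
        Ring.inverse (∏' i : ℕ, (1 - (X 1 : S3) * (X 2 : S3) ^ (i + 1))) := by
  obtain ⟨G, hG, hGm⟩ := exists_hasSum_of_smodEq_zero (f := fun π : KPart k => partMonomial π.1)
    (lowWeight k) fun m π hπ => partMonomial_smodEq_zero (not_le.mp (mem_lowWeight.not.mp hπ))
  obtain ⟨A, hA, hAm⟩ := exists_hasProd_of_smodEq_one
    (f := fun i => 1 + X 0 * X 1 ^ k * X 2 ^ (k * (i + 1))) fun m i hi =>
      smodEq_qIdeal_of_dvd_sub (by simpa using Dvd.dvd.mul_left (pow_dvd_pow _ (by nlinarith)) _)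
  obtain ⟨B, hB, hBm⟩ := exists_hasProd_of_smodEq_one
    (f := fun i => 1 - X 1 * X 2 ^ (i + 1)) fun m i hi =>
      smodEq_qIdeal_of_dvd_sub (by simpa using Dvd.dvd.mul_left (pow_dvd_pow _ (by omega)) _)
  have hGBA : G * B = A := eq_of_forall_smodEq_qIdeal fun m =>
    ((hGm m).mul (hBm m)).trans ((sum_lowWeight_mul_prod_smodEq hk m).trans (hAm m).symm)
  unfold partMonomial at hG
  rw [hG.tsum_eq, hA.tprod_eq, hB.tprod_eq, ← hGBA, mul_assoc,
    Ring.mul_inverse_cancel _ (isUnit_of_smodEq_one (hBm 0)), mul_one]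
end
end

section
/- The generating function ∑ μ^{ℓ_a(π)} ν^{ℓ_b(π)} q^{|π|} over all partitions π whose parts are congruent to a or b modulo k equals ∑_{m,h,i ≥ 0} μ^{m-h-i} ν^{h+i} q^{ma + kh² + (b-a)(h+i)} / (q^k; q^k)_m · [h+i choose h]_{q^k} · [m-h-i choose h]_{q^k}. -/
noncomputable section

/-!
Write the parts `≡ a (mod k)` of a partition as `a + k j` and those `≡ b` as `b + k j`: a
partition becomes a pair of multisets of naturals, so the left side factors as `S_a(μ) S_b(ν)`
with `S_c(μ) = ∑_α μ^α q^(cα) / (q^k; q^k)_α`, because the multisets of size `α` weighted by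
`q^(k · sum)` have generating function `1 / (q^k; q^k)_α` (split off the smallest element and
induct on `α`). On the right, set `β = h + i` and `α = m - β`; the `q`-Vandermonde identity
`∑_h q^(k h²) [β, h] [α, h] = [α + β, β]` and `[α + β, β] / (q^k; q^k)_(α+β) =
1 / ((q^k; q^k)_α (q^k; q^k)_β)` turn the inner sum over `h` into the `(α, β)` term of the same
product. Every series involved tends to `0` `q`-adically, which justifies the rearrangements.
-/

section QBinom

open Polynomial Finset

def qBinom (t : ℕ) : ℕ → ℕ → ℚ[X]
  | _, 0 => 1
  | 0, _ + 1 => 0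
  | n + 1, s + 1 => qBinom t n s + X ^ (t * (s + 1)) * qBinom t n (s + 1)

variable (t : ℕ)

@[simp] theorem qBinom_zero_right (n : ℕ) : qBinom t n 0 = 1 := by cases n <;> rfl

theorem qBinom_succ_succ (n s : ℕ) :
    qBinom t (n + 1) (s + 1) = qBinom t n s + X ^ (t * (s + 1)) * qBinom t n (s + 1) := rfl

theorem qBinom_eq_zero_of_lt {n s : ℕ} (h : n < s) : qBinom t n s = 0 := by
  induction n generalizing s with
  | zero => obtain ⟨s, rfl⟩ := Nat.exists_eq_succ_of_ne_zero h.ne'; rfl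
  | succ n ih =>
    obtain ⟨s, rfl⟩ := Nat.exists_eq_succ_of_ne_zero (Nat.ne_zero_of_lt h)
    rw [qBinom_succ_succ, ih (by omega), ih (by omega), mul_zero, add_zero]

theorem qpoch_succ (n : ℕ) : qpoch t (n + 1) = qpoch t n * (1 - X ^ (t * (n + 1))) :=
  prod_range_succ ..

theorem qBinom_mul_qpoch {n s : ℕ} (h : s ≤ n) :
    qBinom t n s * (qpoch t s * qpoch t (n - s)) = qpoch t n := by
  induction n generalizing s with
  | zero => obtain rfl := Nat.le_zero.mp h; simp [qpoch]
  | succ n ih =>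
    cases s with
    | zero => simp [qpoch]
    | succ s =>
      have hs : s ≤ n := by omega
      have first : qBinom t n s * (qpoch t (s + 1) * qpoch t (n - s)) =
          qpoch t n * (1 - X ^ (t * (s + 1))) := by
        rw [qpoch_succ, ← ih hs]; ring
      have second : qBinom t n (s + 1) * (qpoch t (s + 1) * qpoch t (n - s)) =
          qpoch t n * (1 - X ^ (t * (n - s))) := by
        rcases hs.lt_or_eq with hs | rfl
        · have e : n - s = n - (s + 1) + 1 := by omega
          rw [e, qpoch_succ t (n - (s + 1)), ← ih hs]
          ring
        · simp [qBinom_eq_zero_of_lt t (Nat.lt_succ_self s)]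
      have hexp : (X : ℚ[X]) ^ (t * (s + 1)) * X ^ (t * (n - s)) = X ^ (t * (n + 1)) := by
        rw [← pow_add, ← mul_add]; congr 2; omega
      rw [qBinom_succ_succ, Nat.add_sub_add_right, qpoch_succ t n]
      linear_combination first + X ^ (t * (s + 1)) * second - qpoch t n * hexp

variable {t}

theorem qpoch_ne_zero (ht : 0 < t) (n : ℕ) : qpoch t n ≠ 0 := by
  refine prod_ne_zero_iff.mpr fun i _ h => ?_
  simpa [coeff_X_pow, (Nat.mul_pos ht i.succ_pos).ne] using congrArg (coeff · 0) h

theorem qBinom_symm (ht : 0 < t) {n s : ℕ} (h : s ≤ n) : qBinom t n (n - s) = qBinom t n s := by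
  refine mul_right_cancel₀ (mul_ne_zero (qpoch_ne_zero ht s) (qpoch_ne_zero ht (n - s))) ?_
  rw [qBinom_mul_qpoch t h, mul_comm (qpoch t s), ← qBinom_mul_qpoch t (n.sub_le s),
    Nat.sub_sub_self h]

theorem gauss_natCast (ht : 0 < t) (A B : ℕ) : gauss t A B = qBinom t A B := by
  rcases le_or_gt B A with h | h
  · rw [gauss, if_pos (by omega), ← Nat.cast_sub h, Int.toNat_natCast, Int.toNat_natCast,
      Int.toNat_natCast, ← qBinom_mul_qpoch t h]
    exact mul_div_cancel_right₀ _ (mul_ne_zero (qpoch_ne_zero ht _) (qpoch_ne_zero ht _))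
  · rw [gauss, if_neg (by omega), qBinom_eq_zero_of_lt t h]

variable (t)

theorem choose_two_add (j l : ℕ) : (j + l).choose 2 = j.choose 2 + l.choose 2 + j * l := by
  induction l with
  | zero => simp
  | succ l ih =>
    rw [← add_assoc, Nat.choose_succ_succ', Nat.choose_succ_succ' l, ih, Nat.choose_one_right,
      Nat.choose_one_right]
    ring

/-- `∏_{i < n} (1 + q^i w Y)` with `q = X ^ t`, a polynomial in `Y` over `ℚ[X]`. -/
def qProd (n : ℕ) (w : ℚ[X]) : ℚ[X][X] :=
  ∏ i ∈ range n, (1 + C (X ^ (t * i) * w) * X)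

theorem qProd_add (m n : ℕ) (w : ℚ[X]) :
    qProd t (m + n) w = qProd t m w * qProd t n (X ^ (t * m) * w) := by
  rw [qProd, prod_range_add]
  refine congrArg (_ * ·) (prod_congr rfl fun i _ => ?_)
  rw [mul_add, pow_add, mul_assoc, mul_left_comm]

/-- The `q`-binomial theorem. -/
theorem coeff_qProd (n : ℕ) (w : ℚ[X]) (h : ℕ) :
    (qProd t n w).coeff h = qBinom t n h * X ^ (t * h.choose 2) * w ^ h := by
  induction n generalizing w h with
  | zero => cases h <;> simp [qProd, qBinom, coeff_one]
  | succ n ih =>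
    have peel : qProd t (n + 1) w = qProd t n (X ^ t * w) + qProd t n (X ^ t * w) * C w * X := by
      rw [add_comm, qProd_add, qProd, prod_range_one, mul_zero, pow_zero, one_mul, mul_one]
      ring
    rw [peel, coeff_add]
    cases h with
    | zero => rw [coeff_mul_X_zero, add_zero, ih]; simp
    | succ h =>
      rw [coeff_mul_X, coeff_mul_C, ih, ih, qBinom_succ_succ, Nat.choose_succ_succ',
        Nat.choose_one_right]
      ring

/-- The `q`-Vandermonde identity. -/
theorem sum_antidiagonal_qBinom_mul_qBinom (ht : 0 < t) (α β : ℕ) :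
    ∑ x ∈ antidiagonal β, X ^ (t * x.1 ^ 2) * qBinom t β x.1 * qBinom t α x.1 =
      qBinom t (α + β) β := by
  have term : ∀ x ∈ antidiagonal β,
      qBinom t β x.1 * X ^ (t * x.1.choose 2) * 1 ^ x.1 *
        (qBinom t α x.2 * X ^ (t * x.2.choose 2) * (X ^ (t * β) * 1) ^ x.2) =
      X ^ (t * β.choose 2) * (X ^ (t * x.2 ^ 2) * qBinom t β x.2 * qBinom t α x.2) := by
    rintro ⟨j, l⟩ hx
    obtain rfl : j + l = β := mem_antidiagonal.mp hx
    have hexp : (X : ℚ[X]) ^ (t * j.choose 2) * (X ^ (t * l.choose 2) * (X ^ (t * (j + l))) ^ l) =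
        X ^ (t * (j + l).choose 2) * X ^ (t * l ^ 2) := by
      rw [← pow_mul, ← pow_add, ← pow_add, ← pow_add, choose_two_add]
      ring
    dsimp only
    rw [← qBinom_symm ht (Nat.le_add_left l j), Nat.add_sub_cancel, one_pow, mul_one, mul_one]
    linear_combination qBinom t (j + l) j * qBinom t α l * hexp
  have key := congrArg (coeff · β) (qProd_add t β α 1)
  simp only [coeff_mul, coeff_qProd] at key
  rw [sum_congr rfl term, ← mul_sum, one_pow, mul_one, mul_comm] at key
  rw [add_comm α, mul_left_cancel₀ (pow_ne_zero _ X_ne_zero) key]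
  exact (Nat.sum_antidiagonal_swap
    (f := fun x ↦ X ^ (t * x.1 ^ 2) * qBinom t β x.1 * qBinom t α x.1)).symm

end QBinom

section PowerSeries

open MvPowerSeries Function

instance : T3Space S3 := by
  let _ : TopologicalSpace ℚ := ⊥
  have _ : DiscreteTopology ℚ := ⟨rfl⟩
  exact inferInstanceAs (T3Space ((Fin 3 →₀ ℕ) → ℚ))

instance : IsTopologicalRing S3 := by
  let _ : TopologicalSpace ℚ := ⊥
  have _ : DiscreteTopology ℚ := ⟨rfl⟩
  exact WithPiTopology.instIsTopologicalRing (Fin 3) ℚ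

theorem tsum_pow_mul_one_sub {f : S3} (hf : constantCoeff f = 0) :
    (∑' n : ℕ, f ^ n) * (1 - f) = 1 := by
  let _ : TopologicalSpace ℚ := ⊥
  have _ : DiscreteTopology ℚ := ⟨rfl⟩
  exact WithPiTopology.tsum_pow_mul_one_sub_of_constantCoeff_eq_zero hf

theorem coeff_X_pow_mul_eq_zero {σ R : Type*} [CommSemiring R] {s : σ} {n : ℕ}
    {d : σ →₀ ℕ} (h : d s < n) (g : MvPowerSeries σ R) : coeff d (X s ^ n * g) = 0 := by
  classical
  rw [X_pow_eq, coeff_monomial_mul, if_neg (by rwa [Finsupp.single_le_iff, not_le])]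

/-- `f` tends to `0` in the `q`-adic topology. -/
def QNull {ι : Type*} (f : ι → S3) : Prop :=
  ∃ e : ι → ℕ, (∀ i, X 2 ^ e i ∣ f i) ∧ ∀ N, {i | e i ≤ N}.Finite

namespace QNull

variable {ι κ : Type*} {f : ι → S3} {g : κ → S3}

theorem summable (hf : QNull f) : Summable f := by
  obtain ⟨e, hdvd, he⟩ := hf
  let _ : TopologicalSpace ℚ := ⊥
  have _ : DiscreteTopology ℚ := ⟨rfl⟩
  refine WithPiTopology.summable_iff_summable_coeff.mpr fun d => ?_
  refine summable_of_hasFiniteSupport ((he (d 2)).subset fun i hi => ?_)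
  by_contra hlt
  obtain ⟨r, hr⟩ := hdvd i
  exact hi (show coeff d (f i) = 0 by rw [hr]; exact coeff_X_pow_mul_eq_zero (not_le.mp hlt) r)

theorem mul (hf : QNull f) (hg : QNull g) : QNull fun p : ι × κ => f p.1 * g p.2 := by
  obtain ⟨e, hdvd, he⟩ := hf
  obtain ⟨e', hdvd', he'⟩ := hg
  refine ⟨fun p => e p.1 + e' p.2,
    fun p => pow_add (X 2 : S3) _ _ ▸ mul_dvd_mul (hdvd _) (hdvd' _),
    fun N => ((he N).prod (he' N)).subset fun p hp => ?_⟩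
  have hp : e p.1 + e' p.2 ≤ N := hp
  exact ⟨show e p.1 ≤ N by omega, show e' p.2 ≤ N by omega⟩

theorem tsum_mul_tsum (hf : QNull f) (hg : QNull g) :
    (∑' i, f i) * ∑' j, g j = ∑' p : ι × κ, f p.1 * g p.2 :=
  hf.summable.tsum_mul_tsum hg.summable (hf.mul hg).summable

theorem comp_injective (hf : QNull f) {u : κ → ι} (hu : Injective u) : QNull (f ∘ u) := by
  obtain ⟨e, hdvd, he⟩ := hf
  exact ⟨e ∘ u, fun i => hdvd (u i), fun N => (he N).preimage hu.injOn⟩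

end QNull

end PowerSeries

section Sym

open Function

def consMapAdd (α : ℕ) (p : ℕ × Sym ℕ α) : Sym ℕ (α + 1) :=
  p.1 ::ₛ p.2.map (· + p.1)

/-- The inverse splits off a smallest element `m` and subtracts `m` from the others. -/
theorem consMapAdd_bijective (α : ℕ) : Bijective (consMapAdd α) := by
  have fst_le : ∀ {p q : ℕ × Sym ℕ α}, consMapAdd α p = consMapAdd α q → p.1 ≤ q.1 := by
    intro p q h
    rcases Sym.mem_cons.mp (h ▸ Sym.mem_cons_self q.1 _ : q.1 ∈ consMapAdd α p) with h' | h'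
    · exact h'.ge
    · obtain ⟨x, -, hx⟩ := Sym.mem_map.mp h'
      omega
  refine ⟨fun ⟨m, s⟩ ⟨m', s'⟩ h => ?_, fun s => ?_⟩
  · obtain rfl : m = m' := (fst_le h).antisymm (fst_le h.symm)
    exact Prod.ext rfl
      (Sym.map_injective (add_left_injective m) _ ((Sym.cons_inj_right _ _ _).mp h))
  · obtain ⟨m, hm', hmin⟩ := (s : Multiset ℕ).toFinset.exists_min_image id
      (Multiset.toFinset_nonempty.mpr (Multiset.card_pos.mp (by rw [Sym.card_coe]; omega)))
    have hm : m ∈ s := Multiset.mem_toFinset.mp hm'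
    refine ⟨(m, (s.erase m hm).map (· - m)), ?_⟩
    rw [consMapAdd, Sym.map_map]
    conv_rhs => rw [← Sym.cons_erase hm]
    congr 1
    refine (Sym.map_congr fun x hx => Nat.sub_add_cancel (hmin x ?_)).trans (Sym.map_id' _)
    exact Multiset.mem_toFinset.mpr (Multiset.mem_of_mem_erase (Sym.mem_coe.mpr hx))

theorem sum_consMapAdd (α : ℕ) (p : ℕ × Sym ℕ α) :
    (consMapAdd α p : Multiset ℕ).sum = (α + 1) * p.1 + (p.2 : Multiset ℕ).sum := by
  simp only [consMapAdd, Sym.coe_cons, Sym.coe_map, Multiset.sum_cons, Multiset.sum_map_add,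
    Multiset.map_id', Multiset.map_const', Sym.card_coe, Multiset.sum_replicate, smul_eq_mul]
  ring

end Sym

section Inverse

open MvPowerSeries

theorem pq_qpoch_succ (k α : ℕ) :
    pq (qpoch k (α + 1)) = pq (qpoch k α) * (1 - X 2 ^ (k * (α + 1))) := by
  simp [pq, qpoch_succ]

theorem pq_mul (p p' : Polynomial ℚ) : pq (p * p') = pq p * pq p' :=
  map_mul _ _ _

theorem pq_sum {ι : Type*} (s : Finset ι) (f : ι → Polynomial ℚ) :
    pq (∑ i ∈ s, f i) = ∑ i ∈ s, pq (f i) :=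
  map_sum _ _ _

theorem qNull_geometric {c : ℕ} (hc : 0 < c) : QNull fun n : ℕ => ((X 2 : S3) ^ c) ^ n :=
  ⟨fun n => c * n, fun n => (pow_mul _ c n).dvd, fun N => (Set.finite_Iic N).subset
    fun n (hn : c * n ≤ N) => (Nat.le_mul_of_pos_left n hc).trans hn⟩

theorem qNull_sym {k : ℕ} (hk : 0 < k) (α : ℕ) :
    QNull fun s : Sym ℕ α => (X 2 : S3) ^ (k * (s : Multiset ℕ).sum) :=
  ⟨fun s => k * (s : Multiset ℕ).sum, fun _ => dvd_rfl, fun N =>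
    ((Finset.range (N + 1)).sym α).finite_toSet.subset fun _ (hs : _ ≤ N) =>
      Finset.mem_sym_iff.mpr fun _ hx => Finset.mem_range.mpr <| Nat.lt_succ_of_le <|
        ((Multiset.le_sum_of_mem (Sym.mem_coe.mpr hx)).trans
          (Nat.le_mul_of_pos_left _ hk)).trans hs⟩

theorem tsum_sym_mul_pq_qpoch {k : ℕ} (hk : 0 < k) (α : ℕ) :
    (∑' s : Sym ℕ α, (X 2 : S3) ^ (k * (s : Multiset ℕ).sum)) * pq (qpoch k α) = 1 := by
  induction α with
  | zero =>
    have nil : ∀ s : Sym ℕ 0, (s : Multiset ℕ) = 0 := fun s => Multiset.card_eq_zero.mp s.2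
    simp [tsum_fintype, pq, qpoch, nil]
  | succ α ih =>
    have hc : 0 < k * (α + 1) := by positivity
    have split : ∀ p : ℕ × Sym ℕ α, (X 2 : S3) ^ (k * (consMapAdd α p : Multiset ℕ).sum) =
        ((X 2 : S3) ^ (k * (α + 1))) ^ p.1 * X 2 ^ (k * (p.2 : Multiset ℕ).sum) := fun p => by
      rw [sum_consMapAdd, ← pow_mul, ← pow_add, mul_add, mul_assoc]
    have geom := tsum_pow_mul_one_sub (f := (X 2 : S3) ^ (k * (α + 1))) (by simp [hc.ne'])
    rw [← (Equiv.ofBijective _ (consMapAdd_bijective α)).tsum_eq]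
    simp only [Equiv.ofBijective_apply, split]
    rw [← (qNull_geometric hc).tsum_mul_tsum (qNull_sym hk α), pq_qpoch_succ]
    calc _ = ((∑' s : Sym ℕ α, (X 2 : S3) ^ (k * (s : Multiset ℕ).sum)) * pq (qpoch k α)) *
          ((∑' n : ℕ, ((X 2 : S3) ^ (k * (α + 1))) ^ n) * (1 - X 2 ^ (k * (α + 1)))) := by ring
      _ = 1 := by rw [ih, geom, one_mul]

theorem isUnit_pq_qpoch {k : ℕ} (hk : 0 < k) (α : ℕ) : IsUnit (pq (qpoch k α)) :=
  IsUnit.of_mul_eq_one_right _ (tsum_sym_mul_pq_qpoch hk α)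

theorem inverse_pq_qpoch {k : ℕ} (hk : 0 < k) (α : ℕ) :
    Ring.inverse (pq (qpoch k α)) =
      ∑' s : Sym ℕ α, (X 2 : S3) ^ (k * (s : Multiset ℕ).sum) := by
  rw [← mul_one (Ring.inverse _), ← tsum_sym_mul_pq_qpoch hk α, mul_comm _ (pq _),
    Ring.inverse_mul_cancel_left _ _ (isUnit_pq_qpoch hk α)]

theorem inverse_pq_qpoch_add_mul_pq_qBinom {k : ℕ} (hk : 0 < k) (α β : ℕ) :
    Ring.inverse (pq (qpoch k (α + β))) * pq (qBinom k (α + β) β) =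
      Ring.inverse (pq (qpoch k α)) * Ring.inverse (pq (qpoch k β)) := by
  have hfac := congrArg pq (qBinom_mul_qpoch k (Nat.le_add_left β α))
  rw [Nat.add_sub_cancel, pq_mul, pq_mul] at hfac
  rw [Ring.inverse_mul_eq_iff_eq_mul _ _ _ (isUnit_pq_qpoch hk _), ← hfac]
  calc _ = pq (qBinom k (α + β) β) * (pq (qpoch k β) * Ring.inverse (pq (qpoch k β))) *
        (pq (qpoch k α) * Ring.inverse (pq (qpoch k α))) := by
          rw [Ring.mul_inverse_cancel _ (isUnit_pq_qpoch hk _),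
            Ring.mul_inverse_cancel _ (isUnit_pq_qpoch hk _), mul_one, mul_one]
    _ = _ := by ring

end Inverse

section Sides

open MvPowerSeries

theorem finite_setOf_card_le_sum_le (N : ℕ) :
    {u : Multiset ℕ | Multiset.card u ≤ N ∧ u.sum ≤ N}.Finite := by
  refine (Set.finite_Iic (N • (Finset.range (N + 1)).val)).subset fun u ⟨hcard, hsum⟩ => ?_
  refine Multiset.le_iff_count.mpr fun x => ?_
  rw [Multiset.count_nsmul]
  by_cases hx : x ∈ u
  · rw [Multiset.count_eq_one_of_mem (Finset.range (N + 1)).nodup (Finset.mem_range.mpr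
      (Nat.lt_succ_of_le ((Multiset.le_sum_of_mem hx).trans hsum))), mul_one]
    exact (Multiset.count_le_card x u).trans hcard
  · rw [Multiset.count_eq_zero_of_notMem hx]
    exact Nat.zero_le _

def sideWeight (k c : ℕ) (j : Fin 3) (u : Multiset ℕ) : S3 :=
  X j ^ Multiset.card u * X 2 ^ (c * Multiset.card u + k * u.sum)

def sideTerm (k c : ℕ) (j : Fin 3) (α : ℕ) : S3 :=
  X j ^ α * X 2 ^ (c * α) * Ring.inverse (pq (qpoch k α))

theorem qNull_sideTerm (k : ℕ) {c : ℕ} (hc : 0 < c) (j : Fin 3) : QNull (sideTerm k c j) :=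
  ⟨fun α => c * α, fun _ => (dvd_mul_left _ _).mul_right _, fun N => (Set.finite_Iic N).subset
    fun α (hα : c * α ≤ N) => (Nat.le_mul_of_pos_left α hc).trans hα⟩

theorem qNull_sideWeight {k c : ℕ} (hk : 0 < k) (hc : 0 < c) (j : Fin 3) :
    QNull (sideWeight k c j) :=
  ⟨fun u => c * Multiset.card u + k * u.sum, fun _ => dvd_mul_left _ _, fun N =>
    (finite_setOf_card_le_sum_le N).subset fun u (hu : c * Multiset.card u + k * u.sum ≤ N) =>
      ⟨(Nat.le_mul_of_pos_left _ hc).trans (by omega),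
        (Nat.le_mul_of_pos_left _ hk).trans (by omega)⟩⟩

theorem tsum_sideWeight {k c : ℕ} (hk : 0 < k) (hc : 0 < c) (j : Fin 3) :
    ∑' u, sideWeight k c j u = ∑' α, sideTerm k c j α := by
  have hF := qNull_sideWeight hk hc j
  have he := (Equiv.sigmaFiberEquiv (Multiset.card : Multiset ℕ → ℕ)).injective
  rw [← (Equiv.sigmaFiberEquiv (Multiset.card : Multiset ℕ → ℕ)).tsum_eq,
    Summable.tsum_sigma'
      (f := fun σ => sideWeight k c j (Equiv.sigmaFiberEquiv Multiset.card σ))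
      (fun α => (hF.comp_injective (he.comp sigma_mk_injective)).summable)
      (hF.comp_injective he).summable]
  refine tsum_congr fun α => ?_
  have fiber : ∀ s : Sym ℕ α, sideWeight k c j (Equiv.sigmaFiberEquiv Multiset.card ⟨α, s⟩) =
      X j ^ α * X 2 ^ (c * α) * X 2 ^ (k * (s : Multiset ℕ).sum) := fun s => by
    rw [Equiv.sigmaFiberEquiv_apply, sideWeight, s.2, pow_add, mul_assoc]
    rfl
  change ∑' s : Sym ℕ α, sideWeight k c j (Equiv.sigmaFiberEquiv Multiset.card ⟨α, s⟩) = _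
  rw [tsum_congr fiber, Summable.tsum_mul_left _ (qNull_sym hk α).summable, sideTerm,
    inverse_pq_qpoch hk α]

end Sides

section Partitions

open MvPowerSeries Function

variable {a b k : ℕ}

theorem filter_map_add_mul (c d : ℕ) (u : Multiset ℕ) :
    (u.map fun j => c + k * j).filter (fun x => x % k = d % k) =
      if c % k = d % k then u.map fun j => c + k * j else 0 := by
  split_ifs with h
  · exact Multiset.filter_eq_self.mpr fun x hx => by
      obtain ⟨j, -, rfl⟩ := Multiset.mem_map.mp hx
      rwa [Nat.add_mul_mod_self_left]
  · exact Multiset.filter_eq_nil.mpr fun x hx => by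
      obtain ⟨j, -, rfl⟩ := Multiset.mem_map.mp hx
      rwa [Nat.add_mul_mod_self_left]

theorem add_mul_sub_div_eq {c x : ℕ} (hck : c ≤ k) (hx : 0 < x)
    (hxc : x % k = c % k) : c + k * ((x - c) / k) = x := by
  have hcx : c ≤ x := by
    rcases hck.lt_or_eq with hlt | rfl
    · rw [Nat.mod_eq_of_lt hlt] at hxc
      exact hxc ▸ Nat.mod_le x k
    · exact Nat.le_of_dvd hx (Nat.dvd_of_mod_eq_zero (by rwa [Nat.mod_self] at hxc))
  rw [Nat.mul_div_cancel' (Nat.dvd_of_mod_eq_zero (Nat.sub_mod_eq_zero_of_mod_eq hxc)),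
    Nat.add_sub_cancel' hcx]

theorem sum_map_add_mul (c : ℕ) (u : Multiset ℕ) :
    (u.map fun j => c + k * j).sum = c * Multiset.card u + k * u.sum := by
  induction u using Multiset.induction with
  | empty => simp
  | cons x u ih =>
    rw [Multiset.map_cons, Multiset.sum_cons, ih, Multiset.card_cons, Multiset.sum_cons]
    ring

theorem mod_ne_mod (ha : 1 ≤ a) (hab : a < b) (hbk : b ≤ k) : a % k ≠ b % k := by
  rw [Nat.mod_eq_of_lt (by omega : a < k)]
  rcases hbk.lt_or_eq with hlt | rfl
  · rw [Nat.mod_eq_of_lt hlt]; omega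
  · rw [Nat.mod_self]; omega

variable (a b k) in
def toPartition (p : Multiset ℕ × Multiset ℕ) : Multiset ℕ :=
  p.1.map (fun j => a + k * j) + p.2.map (fun j => b + k * j)

theorem filter_toPartition_a (ha : 1 ≤ a) (hab : a < b) (hbk : b ≤ k)
    (p : Multiset ℕ × Multiset ℕ) :
    (toPartition a b k p).filter (fun x => x % k = a % k) = p.1.map (fun j => a + k * j) := by
  rw [toPartition, Multiset.filter_add, filter_map_add_mul, filter_map_add_mul, if_pos rfl,
    if_neg (mod_ne_mod ha hab hbk).symm, add_zero]

theorem filter_toPartition_b (ha : 1 ≤ a) (hab : a < b) (hbk : b ≤ k)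
    (p : Multiset ℕ × Multiset ℕ) :
    (toPartition a b k p).filter (fun x => x % k = b % k) = p.2.map (fun j => b + k * j) := by
  rw [toPartition, Multiset.filter_add, filter_map_add_mul, filter_map_add_mul, if_pos rfl,
    if_neg (mod_ne_mod ha hab hbk), zero_add]

theorem toPartition_mem (ha : 1 ≤ a) (hab : a < b) (p : Multiset ℕ × Multiset ℕ) :
    ∀ x ∈ toPartition a b k p, 0 < x ∧ (x % k = a % k ∨ x % k = b % k) := by
  intro x hx
  rcases Multiset.mem_add.mp hx with hx | hx <;> obtain ⟨j, -, rfl⟩ := Multiset.mem_map.mp hx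
  · exact ⟨by omega, .inl (Nat.add_mul_mod_self_left a k j)⟩
  · exact ⟨by omega, .inr (Nat.add_mul_mod_self_left b k j)⟩

theorem toPartition_bijective (ha : 1 ≤ a) (hab : a < b) (hbk : b ≤ k) :
    Bijective fun p => (⟨toPartition a b k p, toPartition_mem ha hab p⟩ :
      {π : Multiset ℕ // ∀ x ∈ π, 0 < x ∧ (x % k = a % k ∨ x % k = b % k)}) := by
  have hk : 0 < k := by omega
  refine ⟨fun p q h => ?_, fun ⟨π, hπ⟩ => ?_⟩
  · have h : toPartition a b k p = toPartition a b k q := congrArg Subtype.val h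
    have h₁ := filter_toPartition_a ha hab hbk p ▸ filter_toPartition_a ha hab hbk q ▸
      congrArg (Multiset.filter _) h
    have h₂ := filter_toPartition_b ha hab hbk p ▸ filter_toPartition_b ha hab hbk q ▸
      congrArg (Multiset.filter _) h
    have add_mul_injective : ∀ c, Injective fun j => c + k * j := fun c _ _ hij =>
      Nat.eq_of_mul_eq_mul_left hk (Nat.add_left_cancel hij)
    exact Prod.ext (Multiset.map_injective (add_mul_injective a) h₁)
      (Multiset.map_injective (add_mul_injective b) h₂)
  · have recover : ∀ c, c ≤ k →
        ((π.filter fun x => x % k = c % k).map fun x => (x - c) / k).map (fun j => c + k * j) =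
          π.filter fun x => x % k = c % k := fun c hck => by
      rw [Multiset.map_map]
      refine (Multiset.map_congr rfl fun x hx => ?_).trans (Multiset.map_id' _)
      obtain ⟨hxπ, hxc⟩ := Multiset.mem_filter.mp hx
      exact add_mul_sub_div_eq hck (hπ x hxπ).1 hxc
    refine ⟨(_, _), Subtype.ext
      ((congrArg₂ (· + ·) (recover a (by omega)) (recover b hbk)).trans ?_)⟩
    have b_iff_not_a : ∀ x ∈ π, x % k = b % k ↔ ¬x % k = a % k := fun x hx =>
      ⟨fun hb ha' => mod_ne_mod ha hab hbk (ha'.symm.trans hb), (hπ x hx).2.resolve_left⟩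
    rw [Multiset.filter_congr b_iff_not_a, Multiset.filter_add_not]

theorem tsum_partitions_eq {a b k : ℕ} (ha : 1 ≤ a) (hab : a < b) (hbk : b ≤ k) :
    ∑' π : {π : Multiset ℕ // ∀ x ∈ π, 0 < x ∧ (x % k = a % k ∨ x % k = b % k)},
        (X 0 : S3) ^ (π.1.filter (fun x => x % k = a % k)).card *
          (X 1 : S3) ^ (π.1.filter (fun x => x % k = b % k)).card * (X 2 : S3) ^ π.1.sum =
      (∑' u, sideWeight k a 0 u) * ∑' v, sideWeight k b 1 v := by
  have hk : 0 < k := by omega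
  rw [← (Equiv.ofBijective _ (toPartition_bijective ha hab hbk)).tsum_eq,
    (qNull_sideWeight hk ha 0).tsum_mul_tsum (qNull_sideWeight hk (by omega) 1)]
  refine tsum_congr fun p => ?_
  simp only [Equiv.ofBijective_apply]
  rw [filter_toPartition_a ha hab hbk, filter_toPartition_b ha hab hbk, Multiset.card_map,
    Multiset.card_map, toPartition, Multiset.sum_add, sum_map_add_mul, sum_map_add_mul, sideWeight,
    sideWeight, pow_add, pow_add, pow_add]
  ring

end Partitions

section RHS

open MvPowerSeries Function Finset

variable {a b k : ℕ}

variable (a b k) in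
def rhsTerm (t : ℕ × ℕ × ℕ) : S3 :=
  Ring.inverse (pq (qpoch k t.1)) *
    ((X 0 : S3) ^ ((t.1 : ℤ) - t.2.1 - t.2.2).toNat *
      (X 1 : S3) ^ (t.2.1 + t.2.2) *
        (X 2 : S3) ^ (t.1 * a + k * t.2.1 ^ 2 + (b - a) * (t.2.1 + t.2.2)) *
          pq (gauss k ((t.2.1 : ℤ) + t.2.2) t.2.1) *
            pq (gauss k ((t.1 : ℤ) - t.2.1 - t.2.2) t.2.1))

theorem rhsTerm_eq_zero_of_lt {t : ℕ × ℕ × ℕ} (ht : t.1 < t.2.1 + t.2.2) :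
    rhsTerm a b k t = 0 := by
  have hgauss : gauss k ((t.1 : ℤ) - t.2.1 - t.2.2) t.2.1 = 0 := if_neg (by omega)
  rw [rhsTerm, hgauss, show pq 0 = 0 from map_zero _, mul_zero, mul_zero]

theorem rhsTerm_add (hab : a ≤ b) (hk : 0 < k) {α β h i : ℕ} (hβ : h + i = β) :
    rhsTerm a b k (α + β, h, i) =
      Ring.inverse (pq (qpoch k (α + β))) * (X 0 ^ α * X 1 ^ β * X 2 ^ (a * α + b * β)) *
        pq (Polynomial.X ^ (k * h ^ 2) * qBinom k β h * qBinom k α h) := by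
  subst hβ
  obtain ⟨d, rfl⟩ := Nat.exists_eq_add_of_le hab
  have hα : ((α + (h + i) : ℕ) : ℤ) - h - i = α := by push_cast; ring
  have hhi : (h : ℤ) + i = ((h + i : ℕ) : ℤ) := by push_cast; rfl
  rw [rhsTerm, hα, hhi, Int.toNat_natCast, gauss_natCast hk, gauss_natCast hk,
    Nat.add_sub_cancel_left]
  simp only [pq, map_mul, map_pow, Polynomial.aeval_X]
  ring

theorem sum_antidiagonal_rhsTerm (hab : a ≤ b) (hk : 0 < k) (α β : ℕ) :
    ∑ x ∈ antidiagonal β, rhsTerm a b k (α + β, x.1, x.2) =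
      sideTerm k a 0 α * sideTerm k b 1 β := by
  rw [sum_congr rfl fun x hx => rhsTerm_add hab hk (mem_antidiagonal.mp hx), ← mul_sum,
    ← pq_sum, sum_antidiagonal_qBinom_mul_qBinom k hk, mul_right_comm,
    inverse_pq_qpoch_add_mul_pq_qBinom hk, sideTerm, sideTerm, pow_add]
  ring

theorem qNull_rhsTerm (ha : 1 ≤ a) (hab : a < b) (hk : 0 < k) : QNull (rhsTerm a b k) := by
  refine ⟨fun t => t.1 * a + k * t.2.1 ^ 2 + (b - a) * (t.2.1 + t.2.2),
    fun _ => dvd_mul_of_dvd_right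
      (dvd_mul_of_dvd_left (dvd_mul_of_dvd_left (dvd_mul_left _ _) _) _) _,
    fun N => ((Set.finite_Iic N).prod ((Set.finite_Iic N).prod (Set.finite_Iic N))).subset ?_⟩
  rintro ⟨m, h, i⟩ (hmhi : m * a + k * h ^ 2 + (b - a) * (h + i) ≤ N)
  have hm : m ≤ m * a := Nat.le_mul_of_pos_right m ha
  have hh : h ≤ k * h ^ 2 := (Nat.le_self_pow two_ne_zero h).trans (Nat.le_mul_of_pos_left _ hk)
  have hi : h + i ≤ (b - a) * (h + i) := Nat.le_mul_of_pos_left _ (by omega)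
  exact ⟨show m ≤ N by omega, show h ≤ N by omega, show i ≤ N by omega⟩

theorem tsum_rhsTerm (ha : 1 ≤ a) (hab : a < b) (hk : 0 < k) :
    ∑' t, rhsTerm a b k t = ∑' p : ℕ × ℕ, sideTerm k a 0 p.1 * sideTerm k b 1 p.2 := by
  let ψ : (Σ p : ℕ × ℕ, antidiagonal p.2) → ℕ × ℕ × ℕ := fun σ =>
    (σ.1.1 + σ.1.2, σ.2.1.1, σ.2.1.2)
  have hψ : Injective ψ := by
    rintro ⟨⟨α, β⟩, ⟨⟨h, i⟩, hx⟩⟩ ⟨⟨α', β'⟩, ⟨⟨h', i'⟩, hx'⟩⟩ heq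
    simp only [ψ, Prod.mk.injEq] at heq
    obtain ⟨hα, rfl, rfl⟩ := heq
    rw [HasAntidiagonal.mem_antidiagonal] at hx hx'
    subst hx hx'
    obtain rfl : α = α' := by omega
    rfl
  have hsupp : support (rhsTerm a b k) ⊆ Set.range ψ := by
    rintro ⟨m, h, i⟩ ht
    have hle : h + i ≤ m := not_lt.mp fun hlt => ht (rhsTerm_eq_zero_of_lt hlt)
    exact ⟨⟨(m - (h + i), h + i), ⟨(h, i), mem_antidiagonal.mpr rfl⟩⟩,
      by simp only [ψ, Nat.sub_add_cancel hle]⟩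
  rw [← hψ.tsum_eq hsupp, Summable.tsum_sigma' (f := fun σ => rhsTerm a b k (ψ σ))
    (fun _ => Summable.of_finite) ((qNull_rhsTerm ha hab hk).comp_injective hψ).summable]
  refine tsum_congr fun p => ?_
  rw [tsum_subtype (antidiagonal p.2) fun x => rhsTerm a b k (p.1 + p.2, x.1, x.2),
    sum_antidiagonal_rhsTerm hab.le hk]

end RHS

open MvPowerSeries in
/-- the generating function ∑ μ^{ℓ_a(π)} ν^{ℓ_b(π)} q^{|π|} over
partitions π with all parts ≡ a or b (mod k), with μ = X 0, ν = X 1, q = X 2,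
equals ∑_{m,h,i ≥ 0} μ^{m-h-i} ν^{h+i} q^{ma+kh²+(b-a)(h+i)} / (q^k;q^k)_m
· [h+i, h]_{q^k} · [m-h-i, h]_{q^k}. -/
theorem stmt4 (a b k : ℕ) (ha : 1 ≤ a) (hab : a < b) (hbk : b ≤ k) :
    ∑' π : {π : Multiset ℕ // ∀ x ∈ π, 0 < x ∧ (x % k = a % k ∨ x % k = b % k)},
        (X 0 : S3) ^ (π.1.filter (fun x => x % k = a % k)).card *
          (X 1 : S3) ^ (π.1.filter (fun x => x % k = b % k)).card *
            (X 2 : S3) ^ π.1.sum =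
      ∑' t : ℕ × ℕ × ℕ,
        Ring.inverse (pq (qpoch k t.1)) *
          ((X 0 : S3) ^ ((t.1 : ℤ) - t.2.1 - t.2.2).toNat *
            (X 1 : S3) ^ (t.2.1 + t.2.2) *
              (X 2 : S3) ^ (t.1 * a + k * t.2.1 ^ 2 + (b - a) * (t.2.1 + t.2.2)) *
                pq (gauss k ((t.2.1 : ℤ) + t.2.2) t.2.1) *
                  pq (gauss k ((t.1 : ℤ) - t.2.1 - t.2.2) t.2.1)) := by
  have hk : 0 < k := by omega
  rw [tsum_partitions_eq ha hab hbk, tsum_sideWeight hk ha 0, tsum_sideWeight hk (by omega) 1,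
    (qNull_sideTerm k ha 0).tsum_mul_tsum (qNull_sideTerm k (by omega) 1)]
  exact (tsum_rhsTerm ha hab hk).symm
end
end

section
/- For m ≥ 1 and h ≥ 0, g_{a,b,k}(m+1, kh+b) = ν q^{kh+b} ( g_{a,b,k}(m, kh+a) + g_{a,b,k}(m, kh+b) ), i.e., removing the largest part kh+b from a partition in B_{a,b,k}(m+1) with largest part kh+b yields a bijection onto partitions in B_{a,b,k}(m) with largest part kh+a or kh+b. -/
noncomputable section

/-- The basis set B_{a,b,k}(m): partitions (non-increasing lists) with m parts,
each part ≡ a or b (mod k), last part a or b, and consecutive parts differing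
by less than k. -/
def IsBabk (a b k m : ℕ) (l : List ℕ) : Prop :=
  l.length = m ∧ l.Pairwise (· ≥ ·) ∧
    (∀ x ∈ l, x % k = a % k ∨ x % k = b % k) ∧
    (l.getLast? = some a ∨ l.getLast? = some b) ∧
    l.Chain' (fun x y => x < y + k)

open MvPowerSeries in
/-- g_{a,b,k}(m, lp): the generating function ∑ μ^{ℓ_a(λ)} ν^{ℓ_b(λ)} q^{|λ|}
(μ = X 0, ν = X 1, q = X 2) over partitions λ in B_{a,b,k}(m) with largest
part lp. -/
def gab (a b k m lp : ℕ) : S3 :=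
  ∑' l : {l : List ℕ // IsBabk a b k m l ∧ l.head? = some lp},
    (X 0 : S3) ^ (l.1.filter (fun x => x % k = a % k)).length *
      (X 1 : S3) ^ (l.1.filter (fun x => x % k = b % k)).length *
        (X 2 : S3) ^ l.1.sum

/-!
Every partition in `B_{a,b,k}(m+1)` with largest part `kh+b` is `kh+b` followed by a partition
in `B_{a,b,k}(m)`; the gap condition `λ₁ < λ₂ + k` together with the congruence condition forces
its largest part to be `kh+a` or `kh+b`, and conversely prepending `kh+b` to such a partition
stays in `B_{a,b,k}(m+1)`. Since `1 ≤ a < b ≤ k` makes `a ≢ b (mod k)`, the removed part counts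
towards `ℓ_b` only and contributes exactly `ν q^{kh+b}`.
All the sets involved are finite, which is what lets the infinite sums be split and scaled
termwise.
-/

lemma Nat.ModEq.eq_of_lt_add_of_lt_add {m x y : ℕ} (h : x ≡ y [MOD m]) (hxy : x < y + m)
    (hyx : y < x + m) : x = y :=
  h.eq_of_abs_lt (abs_sub_lt_iff.2 ⟨by omega, by omega⟩)

lemma List.Pairwise.le_of_mem_of_head?_eq {α : Type*} [Preorder α] {l : List α} {a x : α}
    (hl : l.Pairwise (· ≥ ·)) (ha : l.head? = some a) (hx : x ∈ l) : x ≤ a := by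
  obtain ⟨t, rfl⟩ : ∃ t, l = a :: t := List.head?_eq_some_iff.1 ha
  rcases List.mem_cons.1 hx with rfl | hx
  · exact le_rfl
  · exact List.rel_of_pairwise_cons hl hx

lemma List.finite_length_eq_of_forall_mem {α : Type*} {s : Set α} (hs : s.Finite) (n : ℕ) :
    {l : List α | l.length = n ∧ ∀ x ∈ l, x ∈ s}.Finite := by
  have := hs.to_subtype
  refine ((List.finite_length_eq s n).image (List.map Subtype.val)).subset ?_
  rintro l ⟨rfl, hl⟩
  lift l to List s using hl
  exact ⟨l, by simp, rfl⟩

lemma tsum_sum_elim_of_finite {α β M : Type*} [AddCommMonoid M] [TopologicalSpace M]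
    [Finite α] [Finite β] (f : α ⊕ β → M) :
    ∑' x, f x = ∑' a, f (.inl a) + ∑' b, f (.inr b) := by
  have := Fintype.ofFinite α
  have := Fintype.ofFinite β
  simp only [tsum_fintype, Fintype.sum_sum_type]

lemma tsum_mul_left_of_finite {α R : Type*} [NonUnitalNonAssocSemiring R] [TopologicalSpace R]
    [Finite α] (c : R) (f : α → R) : ∑' x, c * f x = c * ∑' x, f x := by
  have := Fintype.ofFinite α
  simp only [tsum_fintype, Finset.mul_sum]

section Babk

variable {a b k : ℕ}

lemma mod_ne_mod_of_lt_of_le (ha : 1 ≤ a) (hab : a < b) (hbk : b ≤ k) : b % k ≠ a % k :=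
  fun h => hab.ne' (Nat.ModEq.eq_of_lt_add_of_lt_add h (by omega) (by omega))

lemma eq_or_eq_of_mod_of_lt_add (ha : 1 ≤ a) (hab : a < b) (hbk : b ≤ k) {h y : ℕ}
    (hy : y % k = a % k ∨ y % k = b % k) (hle : y ≤ k * h + b) (hlt : k * h + b < y + k) :
    y = k * h + a ∨ y = k * h + b := by
  rcases hy with hy | hy
  · have hya : y ≡ k * h + a [MOD k] := by rw [Nat.ModEq, hy, Nat.mul_add_mod]
    exact .inl (hya.eq_of_lt_add_of_lt_add (by omega) (by omega))
  · have hyb : y ≡ k * h + b [MOD k] := by rw [Nat.ModEq, hy, Nat.mul_add_mod]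
    exact .inr (hyb.eq_of_lt_add_of_lt_add (by omega) (by omega))

lemma isBabk_succ_cons_iff (ha : 1 ≤ a) (hab : a < b) (hbk : b ≤ k) {m : ℕ} (hm : 1 ≤ m)
    (h : ℕ) (t : List ℕ) :
    IsBabk a b k (m + 1) ((k * h + b) :: t) ↔
      IsBabk a b k m t ∧ (t.head? = some (k * h + a) ∨ t.head? = some (k * h + b)) := by
  obtain _ | ⟨y, t⟩ := t
  · simp only [IsBabk, List.length_singleton, List.head?_nil, reduceCtorEq, or_self, and_false,
      iff_false, not_and]
    omega
  simp only [List.head?_cons, Option.some.injEq]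
  constructor
  · rintro ⟨hlen, hsort, hmod, hlast, hchain⟩
    refine ⟨⟨by simpa using hlen, hsort.of_cons, fun x hx => hmod x (.tail _ hx),
      by simpa using hlast, List.IsChain.tail hchain⟩, ?_⟩
    exact eq_or_eq_of_mod_of_lt_add ha hab hbk (hmod y (by simp))
      (List.rel_of_pairwise_cons hsort (by simp)) (List.IsChain.rel_head? hchain rfl)
  · rintro ⟨⟨hlen, hsort, hmod, hlast, hchain⟩, hy⟩
    have hyle : y ≤ k * h + b := by omega
    refine ⟨by simp [hlen], List.pairwise_cons.2 ⟨fun x hx => ?_, hsort⟩,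
      List.forall_mem_cons.2 ⟨.inr (Nat.mul_add_mod ..), hmod⟩, by simpa using hlast,
      List.IsChain.cons hchain ?_⟩
    · exact (hsort.le_of_mem_of_head?_eq rfl hx).trans hyle
    · simp only [List.head?_cons, Option.mem_def, Option.some.injEq, forall_eq']
      omega

abbrev BabkHead (a b k m lp : ℕ) : Type :=
  {l : List ℕ // IsBabk a b k m l ∧ l.head? = some lp}

instance (m lp : ℕ) : Finite (BabkHead a b k m lp) :=
  Set.Finite.to_subtype <| (List.finite_length_eq_of_forall_mem (Set.finite_Iic lp) m).subset
    fun _ hl => ⟨hl.1.1, fun _ hx => hl.1.2.1.le_of_mem_of_head?_eq hl.2 hx⟩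

def consBabkHead (ha : 1 ≤ a) (hab : a < b) (hbk : b ≤ k) {m : ℕ} (hm : 1 ≤ m) (h : ℕ) :
    BabkHead a b k m (k * h + a) ⊕ BabkHead a b k m (k * h + b) →
      BabkHead a b k (m + 1) (k * h + b) :=
  Sum.elim
    (fun t => ⟨_ :: t.1, (isBabk_succ_cons_iff ha hab hbk hm h t.1).2 ⟨t.2.1, .inl t.2.2⟩, rfl⟩)
    (fun t => ⟨_ :: t.1, (isBabk_succ_cons_iff ha hab hbk hm h t.1).2 ⟨t.2.1, .inr t.2.2⟩, rfl⟩)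

lemma consBabkHead_bijective (ha : 1 ≤ a) (hab : a < b) (hbk : b ≤ k) {m : ℕ} (hm : 1 ≤ m)
    (h : ℕ) : Function.Bijective (consBabkHead ha hab hbk hm h) := by
  refine ⟨?_, ?_⟩
  · rintro (⟨s, hs, hsh⟩ | ⟨s, hs, hsh⟩) (⟨t, ht, hth⟩ | ⟨t, ht, hth⟩) hst <;>
      simp only [consBabkHead, Sum.elim_inl, Sum.elim_inr, Subtype.mk.injEq, List.cons.injEq,
        true_and] at hst <;> subst hst
    · rfl
    · rw [hsh, Option.some.injEq] at hth; omega
    · rw [hsh, Option.some.injEq] at hth; omega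
    · rfl
  · rintro ⟨_ | ⟨c, t⟩, hl, hc⟩
    · exact absurd hc (by simp)
    obtain rfl : c = k * h + b := Option.some.inj hc
    obtain ⟨ht, hth | hth⟩ := (isBabk_succ_cons_iff ha hab hbk hm h t).1 hl
    · exact ⟨.inl ⟨t, ht, hth⟩, rfl⟩
    · exact ⟨.inr ⟨t, ht, hth⟩, rfl⟩

open MvPowerSeries in
def babkWeight (a b k : ℕ) (l : List ℕ) : S3 :=
  (X 0 : S3) ^ (l.filter (fun x => x % k = a % k)).length *
    (X 1 : S3) ^ (l.filter (fun x => x % k = b % k)).length * (X 2 : S3) ^ l.sum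

lemma gab_eq_tsum_babkWeight (m lp : ℕ) :
    gab a b k m lp = ∑' l : BabkHead a b k m lp, babkWeight a b k l.1 :=
  rfl

open MvPowerSeries in
lemma babkWeight_cons (hba : b % k ≠ a % k) {c : ℕ} (hc : c % k = b % k) (t : List ℕ) :
    babkWeight a b k (c :: t) = (X 1 : S3) * (X 2 : S3) ^ c * babkWeight a b k t := by
  simp only [babkWeight, List.filter_cons, hc, hba, decide_true, decide_false, if_true,
    Bool.false_eq_true, if_false, List.length_cons, List.sum_cons, pow_succ, pow_add]
  ring

end Babk

open MvPowerSeries in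
/-- for m ≥ 1 and h ≥ 0,
g_{a,b,k}(m+1, kh+b) = ν q^{kh+b} (g_{a,b,k}(m, kh+a) + g_{a,b,k}(m, kh+b)). -/
theorem stmt7 (a b k m h : ℕ) (ha : 1 ≤ a) (hab : a < b) (hbk : b ≤ k)
    (hm : 1 ≤ m) :
    gab a b k (m + 1) (k * h + b) =
      (X 1 : S3) * (X 2 : S3) ^ (k * h + b) *
        (gab a b k m (k * h + a) + gab a b k m (k * h + b)) := by
  have hcons := babkWeight_cons (mod_ne_mod_of_lt_of_le ha hab hbk) (Nat.mul_add_mod k h b)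
  simp only [gab_eq_tsum_babkWeight]
  rw [← (Equiv.ofBijective _ (consBabkHead_bijective ha hab hbk hm h)).tsum_eq,
    tsum_sum_elim_of_finite]
  simp only [Equiv.ofBijective_apply, consBabkHead, Sum.elim_inl, Sum.elim_inr, hcons,
    tsum_mul_left_of_finite, mul_add]
end
end

section
/- Every partition with m parts, each part congruent to a or b modulo k, can be written uniquely as the part-wise sum of a partition in B_{a,b,k}(m) and a non-increasing sequence of m nonnegative multiples of k; i.e., P_{a,b,k} is a separable integer partition class with modulus k and basis B_{a,b,k}. -/
/-!
Append a sentinel part `π_{m+1} = 1` and split every gap `π_i - π_{i+1} = r_i + k q_i` with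
`0 ≤ r_i < k`. Summing the `r_i` upwards from `1` gives `λ`, summing the `k q_i` gives `μ`.
Then `λ` climbs by less than `k` at each step and ends in `[1, k]`, which together with its
residues (those of `π`) puts it in `B_{a,b,k}(m)`, while `μ` is a non-increasing sequence of
multiples of `k`. For uniqueness, go up from the bottom: each `λ_i` is pinned down inside the
window `[λ_{i+1}, λ_{i+1} + k)` by its residue `π_i mod k`, and `λ_{m+1} = 1` starts the recursion.
-/

noncomputable section

/-- Membership in P_{a,b,k}: a partition all of whose parts are ≡ a or b mod k. -/
def InPabk (a b k : ℕ) (l : List ℕ) : Prop :=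
  l.Pairwise (· ≥ ·) ∧ ∀ x ∈ l, 0 < x ∧ (x % k = a % k ∨ x % k = b % k)

namespace SeparablePartition

open List

section ListLemmas

variable {α β γ : Type*}

theorem headD_zipWith (f : α → β → γ) (a : α) (b : β) :
    ∀ {L : List α} {M : List β}, L.length = M.length →
      (zipWith f L M).headD (f a b) = f (L.headD a) (M.headD b)
  | [], [], _ => rfl
  | _ :: _, _ :: _, _ => rfl

theorem pairwise_zipWith {R : α → α → Prop} {S : β → β → Prop} {T : γ → γ → Prop}
    {f : α → β → γ} (hf : ∀ a a' b b', R a a' → S b b' → T (f a b) (f a' b'))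
    {L : List α} {M : List β} (hL : L.Pairwise R) (hM : M.Pairwise S) :
    (zipWith f L M).Pairwise T := by
  rw [pairwise_iff_getElem] at *
  intro i j hi hj hij
  simp only [length_zipWith, getElem_zipWith] at hi hj ⊢
  exact hf _ _ _ _ (hL i j (by omega) (by omega) hij) (hM i j (by omega) (by omega) hij)

theorem _root_.List.IsChain.and {R S : α → α → Prop} {l : List α} (hR : l.IsChain R)
    (hS : l.IsChain S) : l.IsChain fun a b => R a b ∧ S a b := by
  rw [isChain_iff_getElem] at *
  exact fun i hi => ⟨hR i hi, hS i hi⟩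

end ListLemmas

variable {k : ℕ}

theorem forall_mem_zipWith_add_mod_iff {P : ℕ → Prop} :
    ∀ {L M : List ℕ}, L.length = M.length → (∀ y ∈ M, k ∣ y) →
      ((∀ z ∈ zipWith (· + ·) L M, P (z % k)) ↔ ∀ x ∈ L, P (x % k))
  | [], [], _, _ => by simp
  | x :: L, y :: M, hlen, hM => by
    obtain ⟨c, hc⟩ := hM y mem_cons_self
    have ih := forall_mem_zipWith_add_mod_iff (P := P) (L := L) (M := M) (by simpa using hlen)
      fun z hz => hM z (mem_cons_of_mem _ hz)
    simp only [zipWith_cons_cons, forall_mem_cons, ih, hc, Nat.add_mul_mod_self_left]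

theorem eq_of_mod_eq_of_mem_Ico {p l₁ l₂ : ℕ} (h₁ : l₁ ∈ Set.Ico p (p + k))
    (h₂ : l₂ ∈ Set.Ico p (p + k)) (hmod : l₁ % k = l₂ % k) : l₁ = l₂ := by
  refine Nat.ModEq.eq_of_abs_lt hmod (abs_sub_lt_iff.2 ?_)
  simp only [Set.mem_Ico] at h₁ h₂
  omega

/-- The sentinel `1` appended at the end encodes both `1 ≤ λ_m` and `λ_m ≤ k`. -/
def IsStaircase (k : ℕ) (L : List ℕ) : Prop :=
  (L ++ [1]).IsChain fun x y => y ≤ x ∧ x < y + k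

theorem isStaircase_nil : IsStaircase k [] := isChain_singleton 1

theorem isStaircase_cons {l : ℕ} {L : List ℕ} :
    IsStaircase k (l :: L) ↔ l ∈ Set.Ico (L.headD 1) (L.headD 1 + k) ∧ IsStaircase k L := by
  cases L <;> simp [IsStaircase, isChain_cons_cons]

theorem IsStaircase.pairwise_ge {L : List ℕ} (h : IsStaircase k L) :
    (L ++ [1]).Pairwise (· ≥ ·) :=
  (h.imp fun _ _ h => h.1).pairwise

theorem IsStaircase.eq_of_zipWith_add_eq : ∀ {L₁ M₁ L₂ M₂ : List ℕ},
    IsStaircase k L₁ → IsStaircase k L₂ → L₁.length = M₁.length → L₂.length = M₂.length →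
    (∀ y ∈ M₁, k ∣ y) → (∀ y ∈ M₂, k ∣ y) →
    zipWith (· + ·) L₁ M₁ = zipWith (· + ·) L₂ M₂ → L₁ = L₂ ∧ M₁ = M₂
  | [], [], [], [], _, _, _, _, _, _, _ => ⟨rfl, rfl⟩
  | l₁ :: L₁, m₁ :: M₁, l₂ :: L₂, m₂ :: M₂, h₁, h₂, hlen₁, hlen₂, hM₁, hM₂, h => by
    simp only [zipWith_cons_cons, cons.injEq] at h
    rw [isStaircase_cons] at h₁ h₂
    obtain ⟨rfl, rfl⟩ := h₁.2.eq_of_zipWith_add_eq h₂.2 (by simpa using hlen₁)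
      (by simpa using hlen₂) (fun y hy => hM₁ y (mem_cons_of_mem _ hy))
      (fun y hy => hM₂ y (mem_cons_of_mem _ hy)) h.2
    obtain ⟨c₁, rfl⟩ := hM₁ m₁ mem_cons_self
    obtain ⟨c₂, rfl⟩ := hM₂ m₂ mem_cons_self
    have hmod : l₁ % k = l₂ % k := by
      simpa only [Nat.add_mul_mod_self_left] using congrArg (· % k) h.1
    obtain rfl := eq_of_mod_eq_of_mem_Ico h₁.1 h₂.1 hmod
    simp_all
  | [], _ :: _, _, _, _, _, hlen, _, _, _, _ | _ :: _, [], _, _, _, _, hlen, _, _, _, _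
  | _, _, [], _ :: _, _, _, _, hlen, _, _, _ | _, _, _ :: _, [], _, _, _, hlen, _, _, _ => by
    simp at hlen
  | [], [], _ :: _, _ :: _, _, _, _, _, _, _, h | _ :: _, _ :: _, [], [], _, _, _, _, _, _, h => by
    simp at h

def basisPart (k : ℕ) : List ℕ → List ℕ
  | [] => []
  | x :: xs => ((basisPart k xs).headD 1 + (x - xs.headD 1) % k) :: basisPart k xs

def multiplePart (k : ℕ) : List ℕ → List ℕ
  | [] => []
  | x :: xs => ((multiplePart k xs).headD 0 + k * ((x - xs.headD 1) / k)) :: multiplePart k xs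

@[simp]
theorem length_basisPart (π : List ℕ) : (basisPart k π).length = π.length := by
  induction π <;> simp_all [basisPart]

@[simp]
theorem length_multiplePart (π : List ℕ) : (multiplePart k π).length = π.length := by
  induction π <;> simp_all [multiplePart]

theorem isStaircase_basisPart (hk : 0 < k) (π : List ℕ) : IsStaircase k (basisPart k π) := by
  induction π with
  | nil => exact isStaircase_nil
  | cons x xs ih =>
    refine isStaircase_cons.2 ⟨?_, ih⟩
    have := Nat.mod_lt (x - xs.headD 1) hk
    simp only [Set.mem_Ico]
    omega

theorem pairwise_multiplePart (π : List ℕ) : (multiplePart k π).Pairwise (· ≥ ·) := by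
  refine IsChain.pairwise ?_
  induction π with
  | nil => exact isChain_nil
  | cons x xs ih =>
    refine ih.cons fun y hy => ?_
    obtain ⟨t, ht⟩ := head?_eq_some_iff.1 hy
    simp [ht]

theorem dvd_of_mem_multiplePart {π : List ℕ} : ∀ y ∈ multiplePart k π, k ∣ y := by
  induction π with
  | nil => simp [multiplePart]
  | cons x xs ih =>
    simp only [multiplePart, forall_mem_cons]
    refine ⟨dvd_add ?_ (dvd_mul_right _ _), ih⟩
    cases h : multiplePart k xs <;> simp_all

theorem zipWith_basisPart_multiplePart {π : List ℕ} (hπ : (π ++ [1]).IsChain (· ≥ ·)) :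
    zipWith (· + ·) (basisPart k π) (multiplePart k π) = π := by
  induction π with
  | nil => rfl
  | cons x xs ih =>
    have hx : xs.headD 1 ≤ x := (isChain_cons.1 hπ).1 _ (by cases xs <;> rfl)
    have ih := ih (isChain_cons.1 hπ).2
    have hhead : (basisPart k xs).headD 1 + (multiplePart k xs).headD 0 = xs.headD 1 := by
      rw [← headD_zipWith (· + ·) 1 0 (by simp), ih]
    have := Nat.mod_add_div (x - xs.headD 1) k
    simp only [basisPart, multiplePart, zipWith_cons_cons, ih, cons.injEq, and_true]
    omega

theorem inPabk_iff {a b : ℕ} {π : List ℕ} :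
    InPabk a b k π ↔ (π ++ [1]).Pairwise (· ≥ ·) ∧ ∀ x ∈ π, x % k = a % k ∨ x % k = b % k := by
  simp only [InPabk, pairwise_append, mem_singleton, forall_eq, pairwise_singleton, true_and,
    ge_iff_le, Nat.one_le_iff_ne_zero, Nat.pos_iff_ne_zero]
  grind

theorem isBabk_iff {a b m : ℕ} (ha : 1 ≤ a) (hab : a < b) (hbk : b ≤ k) {L : List ℕ} :
    IsBabk a b k m L ↔ L.length = m ∧ L ≠ [] ∧
      (∀ x ∈ L, x % k = a % k ∨ x % k = b % k) ∧ IsStaircase k L := by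
  constructor
  · rintro ⟨hlen, hsorted, hres, hlast, hchain⟩
    obtain ⟨c, hc, hcab⟩ : ∃ c, L.getLast? = some c ∧ (c = a ∨ c = b) := by
      rcases hlast with h | h
      exacts [⟨a, h, .inl rfl⟩, ⟨b, h, .inr rfl⟩]
    refine ⟨hlen, fun hL => by simp [hL] at hc, hres, ?_⟩
    refine isChain_append.2 ⟨hsorted.isChain.and hchain, isChain_singleton 1, ?_⟩
    simp only [hc, Option.mem_def, Option.some.injEq, head?_cons, forall_eq']
    omega
  · rintro ⟨hlen, hne, hres, hst⟩
    have hc := getLast?_eq_some_getLast hne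
    have hbound : L.getLast hne ∈ Set.Ico 1 (1 + k) := (isChain_append.1 hst).2.2 _ hc 1 rfl
    have hmem {r : ℕ} (h₁ : 1 ≤ r) (h₂ : r ≤ k) : r ∈ Set.Ico 1 (1 + k) := ⟨h₁, by omega⟩
    refine ⟨hlen, (pairwise_append.1 hst.pairwise_ge).1, hres, ?_,
      hst.left_of_append.imp fun _ _ h => h.2⟩
    rw [hc, Option.some_inj, Option.some_inj]
    rcases hres _ (getLast_mem hne) with h | h
    · exact .inl (eq_of_mod_eq_of_mem_Ico hbound (hmem ha (by omega)) h)
    · exact .inr (eq_of_mod_eq_of_mem_Ico hbound (hmem (by omega) hbk) h)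

theorem existsUnique_isBabk_decomposition {a b m : ℕ} (ha : 1 ≤ a) (hab : a < b) (hbk : b ≤ k)
    (hm : 1 ≤ m) {π : List ℕ} (hπ : InPabk a b k π) (hlen : π.length = m) :
    ∃! p : List ℕ × List ℕ,
      IsBabk a b k m p.1 ∧ p.2.length = m ∧ p.2.Pairwise (· ≥ ·) ∧
        (∀ x ∈ p.2, k ∣ x) ∧ π = zipWith (· + ·) p.1 p.2 := by
  have hk : 0 < k := by omega
  obtain ⟨hsorted, hres⟩ := inPabk_iff.1 hπ
  have hsum := zipWith_basisPart_multiplePart (k := k) hsorted.isChain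
  have hlen' : (basisPart k π).length = (multiplePart k π).length := by simp
  have hres' : ∀ x ∈ basisPart k π, x % k = a % k ∨ x % k = b % k := by
    rw [← hsum] at hres
    exact (forall_mem_zipWith_add_mod_iff (P := fun r => r = a % k ∨ r = b % k) hlen'
      dvd_of_mem_multiplePart).1 hres
  have hne : basisPart k π ≠ [] := ne_nil_of_length_pos (by rw [length_basisPart, hlen]; omega)
  refine ⟨(basisPart k π, multiplePart k π), ⟨?_, by simp [hlen], pairwise_multiplePart π,
    dvd_of_mem_multiplePart, hsum.symm⟩, ?_⟩
  · exact (isBabk_iff ha hab hbk).2 ⟨by simp [hlen], hne, hres', isStaircase_basisPart hk π⟩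
  rintro ⟨L, M⟩ ⟨hL, hMlen, -, hM, hπL⟩
  obtain ⟨hLlen, -, -, hLst⟩ := (isBabk_iff ha hab hbk).1 hL
  obtain ⟨rfl, rfl⟩ := hLst.eq_of_zipWith_add_eq (isStaircase_basisPart hk π) (by simp [*])
    hlen' hM dvd_of_mem_multiplePart (hπL.symm.trans hsum.symm)
  rfl

theorem inPabk_zipWith_add {a b m : ℕ} (ha : 1 ≤ a) (hab : a < b) (hbk : b ≤ k)
    {lam mu : List ℕ} (hlam : IsBabk a b k m lam) (hmu : mu.length = m)
    (hmu_sorted : mu.Pairwise (· ≥ ·)) (hmu_dvd : ∀ x ∈ mu, k ∣ x) :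
    InPabk a b k (zipWith (· + ·) lam mu) := by
  obtain ⟨hlen, -, hres, hst⟩ := (isBabk_iff ha hab hbk).1 hlam
  have hlen' : lam.length = mu.length := hlen.trans hmu.symm
  have hmu' : (mu ++ [0]).Pairwise (· ≥ ·) :=
    pairwise_append.2 ⟨hmu_sorted, pairwise_singleton _ _, by simp⟩
  refine inPabk_iff.2 ⟨?_, (forall_mem_zipWith_add_mod_iff
    (P := fun r => r = a % k ∨ r = b % k) hlen' hmu_dvd).2 hres⟩
  simpa [zipWith_append hlen'] using pairwise_zipWith (f := (· + ·)) (T := (· ≥ ·))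
    (fun _ _ _ _ h₁ h₂ => Nat.add_le_add h₁ h₂) hst.pairwise_ge hmu'

end SeparablePartition

open SeparablePartition in
/-- P_{a,b,k} is a separable integer partition class with modulus k
and basis B_{a,b,k}: every partition in P_{a,b,k} with m parts is uniquely the
part-wise sum of a partition in B_{a,b,k}(m) and a non-increasing sequence of m
nonnegative multiples of k, and every such sum lies in P_{a,b,k}. -/
theorem stmt8 (a b k : ℕ) (ha : 1 ≤ a) (hab : a < b) (hbk : b ≤ k) :
    (∀ m : ℕ, 1 ≤ m → ∀ π : List ℕ, InPabk a b k π → π.length = m →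
      ∃! p : List ℕ × List ℕ,
        IsBabk a b k m p.1 ∧ p.2.length = m ∧ p.2.Pairwise (· ≥ ·) ∧
          (∀ x ∈ p.2, k ∣ x) ∧ π = List.zipWith (· + ·) p.1 p.2) ∧
    (∀ m : ℕ, 1 ≤ m → ∀ lam mu : List ℕ, IsBabk a b k m lam → mu.length = m →
      mu.Pairwise (· ≥ ·) → (∀ x ∈ mu, k ∣ x) →
        InPabk a b k (List.zipWith (· + ·) lam mu)) :=
  ⟨fun _ hm _ hπ hlen => existsUnique_isBabk_decomposition ha hab hbk hm hπ hlen,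
    fun _ _ _ _ hlam => inPabk_zipWith_add ha hab hbk hlam⟩
end
end

section
/- For m ≥ 1, g_{k,r}(m+1, overline(r)) = q^r · ∑_{s=1}^{r} g_{k,r}(m, s), where g_{k,r}(m, l) is the weight generating function for overpartitions in B_{k,r}(m) with largest part l (l possibly overlined). -/
noncomputable section

/-- Linear order on (possibly overlined) parts: 1 < 1̄ < 2 < 2̄ < ⋯ ;
ord (a, false) = 2a, ord (a, true) = 2a + 1. -/
def ord (p : ℕ × Bool) : ℕ := 2 * p.1 + (if p.2 then 1 else 0)

/-- An overpartition as a non-increasing list of (value, overlined?) pairs: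
parts positive, non-increasing in the above order (so an overlined part comes
before the equal non-overlined parts), and each value overlined at most once. -/
def IsOverList (l : List (ℕ × Bool)) : Prop :=
  (∀ p ∈ l, 0 < p.1) ∧ l.Pairwise (fun p q => ord q ≤ ord p) ∧
    ∀ a : ℕ, l.count (a, true) ≤ 1

/-- Number of overlined parts of an overpartition list. -/
def olL (l : List (ℕ × Bool)) : ℕ := (l.filter (fun p => p.2 = true)).length

/-- Weight of an overpartition list. -/
def wtL (l : List (ℕ × Bool)) : ℕ := (l.map Prod.fst).sum
/-- The basis set B_{k,r}(m): overpartitions with m parts, only parts ≡ r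
(mod k) overlined, last part ≤ r̄, and for consecutive parts: whenever
λ_{i+1} ≤ kj + r (in the order 1 < 1̄ < 2 < 2̄ < ⋯, for any j ≥ 0) one has
λ_i ≤ overline(kj + r).  (For the unique j ≥ 1 with
overline(k(j-1)+r) ≤ λ_{i+1} ≤ kj+r this is the binding condition
λ_i ≤ overline(kj+r); the conditions for larger j are implied, and the j = 0
case handles λ_{i+1} ≤ r.) -/
def IsBkr (k r m : ℕ) (l : List (ℕ × Bool)) : Prop :=
  l.length = m ∧ IsOverList l ∧ (∀ p ∈ l, p.2 = true → p.1 % k = r % k) ∧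
    (∀ p, l.getLast? = some p → ord p ≤ 2 * r + 1) ∧
    l.Chain' (fun p q => ∀ j : ℕ, ord q ≤ 2 * (k * j + r) → ord p ≤ 2 * (k * j + r) + 1)
open MvPowerSeries in
/-- g_{k,r}(m, p): the weight generating function (q = X 2) for overpartitions
in B_{k,r}(m) with largest part p (a pair (value, overlined?)). -/
def gkr (k r m : ℕ) (p : ℕ × Bool) : S3 :=
  ∑' l : {l : List (ℕ × Bool) // IsBkr k r m l ∧ l.head? = some p},
    (X 2 : S3) ^ wtL l.1

/-!
Prepending `r̄` is a bijection from the overpartitions in `B_{k,r}(m)` whose largest part is a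
non-overlined `s ≤ r` onto those in `B_{k,r}(m+1)` whose largest part is `r̄`. The difference
condition between `r̄` and `s` holds automatically; conversely, the part following `r̄` is at most
`r̄` and cannot be overlined, because the only overlinable part in `1, …, r` is `r` itself (as
`r ≤ k`) and `r̄` occurs at most once. Since all parts are bounded by the largest one, each
generating function `g_{k,r}(m, p)` is a finite sum, and the bijection adds `r` to the weight.
-/

theorem List.finite_length_eq_forall_mem {α : Type*} {S : Set α} (hS : S.Finite) (n : ℕ) :
    {l : List α | l.length = n ∧ ∀ a ∈ l, a ∈ S}.Finite := by
  have : Finite S := hS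
  refine ((List.finite_length_eq S n).image (List.map Subtype.val)).subset ?_
  rintro l ⟨rfl, hl⟩
  exact ⟨l.attach.map fun a => ⟨a.1, hl a.1 a.2⟩, by simp, by simp⟩

@[simp] theorem ord_true (a : ℕ) : ord (a, true) = 2 * a + 1 := rfl

@[simp] theorem ord_false (a : ℕ) : ord (a, false) = 2 * a := rfl

theorem fst_le_of_ord_le {p q : ℕ × Bool} (h : ord q ≤ ord p) : q.1 ≤ p.1 := by
  unfold ord at h
  split_ifs at h <;> omega

theorem IsOverList.ord_le_head {p : ℕ × Bool} {l : List (ℕ × Bool)} (h : IsOverList (p :: l)) :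
    ∀ q ∈ p :: l, ord q ≤ ord p := by
  simp only [List.mem_cons, forall_eq_or_imp, le_refl, true_and]
  exact (List.pairwise_cons.1 h.2.1).1

theorem isOverList_cons_iff {p : ℕ × Bool} {l : List (ℕ × Bool)} :
    IsOverList (p :: l) ↔
      IsOverList l ∧ 0 < p.1 ∧ (∀ q ∈ l, ord q ≤ ord p) ∧ (p.2 = true → p ∉ l) := by
  have hcount : (∀ a, (p :: l).count (a, true) ≤ 1) ↔
      (∀ a, l.count (a, true) ≤ 1) ∧ (p.2 = true → p ∉ l) := by
    obtain ⟨a, _ | _⟩ := p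
    · simp
    · refine ⟨fun h => ⟨fun b => ?_, fun _ ha => ?_⟩, fun ⟨h, ha⟩ b => ?_⟩
      · exact (List.count_le_count_cons ..).trans (h b)
      · have := h a
        rw [List.count_cons_self] at this
        exact (List.count_pos_iff.2 ha).ne' (by omega)
      · rw [List.count_cons]
        split_ifs with hb
        · rw [← beq_iff_eq.1 hb, List.count_eq_zero.2 (ha rfl)]
        · exact h b
  simp only [IsOverList, List.forall_mem_cons, List.pairwise_cons, hcount]
  tauto

theorem finite_setOf_isBkr_head (k r m : ℕ) (p : ℕ × Bool) :
    {l | IsBkr k r m l ∧ l.head? = some p}.Finite := by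
  refine (List.finite_length_eq_forall_mem ((Set.finite_Iic p.1).prod Set.finite_univ) m).subset ?_
  rintro (_ | ⟨p', l⟩) ⟨⟨hlen, hover, -⟩, hhead⟩
  · simp at hhead
  · obtain rfl : p' = p := by simpa using hhead
    exact ⟨hlen, fun q hq => ⟨fst_le_of_ord_le (hover.ord_le_head q hq), trivial⟩⟩

def bkrHead (k r m : ℕ) (p : ℕ × Bool) : Finset (List (ℕ × Bool)) :=
  (finite_setOf_isBkr_head k r m p).toFinset

theorem mem_bkrHead {k r m : ℕ} {p : ℕ × Bool} {l : List (ℕ × Bool)} :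
    l ∈ bkrHead k r m p ↔ IsBkr k r m l ∧ l.head? = some p :=
  Set.Finite.mem_toFinset _

open MvPowerSeries in
theorem gkr_eq_sum (k r m : ℕ) (p : ℕ × Bool) :
    gkr k r m p = ∑ l ∈ bkrHead k r m p, (X 2 : S3) ^ wtL l := by
  rw [gkr, ← Finset.tsum_subtype', bkrHead, Set.Finite.coe_toFinset]
  rfl

set_option linter.deprecated false in
theorem isBkr_cons_cons_iff {k r m : ℕ} {p q : ℕ × Bool} {t : List (ℕ × Bool)} :
    IsBkr k r (m + 1) (p :: q :: t) ↔
      IsBkr k r m (q :: t) ∧ 0 < p.1 ∧ (∀ x ∈ q :: t, ord x ≤ ord p) ∧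
        (p.2 = true → p ∉ q :: t ∧ p.1 % k = r % k) ∧
        ∀ j, ord q ≤ 2 * (k * j + r) → ord p ≤ 2 * (k * j + r) + 1 := by
  simp only [IsBkr, isOverList_cons_iff, List.length_cons, List.forall_mem_cons,
    List.getLast?_cons_cons, List.Chain', List.isChain_cons_cons, add_left_inj]
  tauto

theorem isBkr_overline_cons_iff {k r m : ℕ} (hr : 1 ≤ r) (hrk : r ≤ k) (hm : 1 ≤ m)
    {t : List (ℕ × Bool)} :
    IsBkr k r (m + 1) ((r, true) :: t) ↔
      IsBkr k r m t ∧ ∃ s ∈ Finset.Icc 1 r, t.head? = some (s, false) := by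
  rcases t with _ | ⟨⟨s, b⟩, t⟩
  · simp only [IsBkr, List.length_singleton, List.length_nil, List.head?_nil, reduceCtorEq]
    omega
  rw [isBkr_cons_cons_iff]
  simp only [List.head?_cons, Option.some.injEq, Prod.mk.injEq, Finset.mem_Icc]
  constructor
  · rintro ⟨hB, -, hle, hnot, -⟩
    have hs : ord (s, b) ≤ 2 * r + 1 := hle _ List.mem_cons_self
    have hpos : 0 < s := hB.2.1.1 _ List.mem_cons_self
    obtain rfl : b = false := by
      cases b
      · rfl
      rw [ord_true] at hs
      have hmod : s ≡ r [MOD k] := hB.2.2.1 _ List.mem_cons_self rfl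
      obtain rfl : s = r := hmod.eq_of_abs_lt (abs_lt.2 ⟨by omega, by omega⟩)
      exact ((hnot trivial).1 List.mem_cons_self).elim
    rw [ord_false] at hs
    exact ⟨hB, s, ⟨hpos, by omega⟩, rfl, rfl⟩
  · rintro ⟨hB, s, ⟨h1, h2⟩, rfl, rfl⟩
    have hle := hB.2.1.ord_le_head
    have hsr : ord (s, false) < ord (r, true) := by rw [ord_false, ord_true]; omega
    exact ⟨hB, hr, fun x hx => (hle x hx).trans hsr.le,
      fun _ => ⟨fun hmem => (hle _ hmem).not_gt hsr, trivial⟩, fun j _ => by rw [ord_true]; omega⟩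

theorem wtL_cons (p : ℕ × Bool) (l : List (ℕ × Bool)) : wtL (p :: l) = p.1 + wtL l := by
  simp [wtL]

theorem disjoint_bkrHead {k r m : ℕ} {p p' : ℕ × Bool} (h : p ≠ p') :
    Disjoint (bkrHead k r m p) (bkrHead k r m p') :=
  Finset.disjoint_left.2 fun _ hl hl' =>
    h (Option.some_injective _ ((mem_bkrHead.1 hl).2.symm.trans (mem_bkrHead.1 hl').2))

theorem bkrHead_overline_eq {k r m : ℕ} (hr : 1 ≤ r) (hrk : r ≤ k) (hm : 1 ≤ m) :
    bkrHead k r (m + 1) (r, true) =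
      ((Finset.Icc 1 r).biUnion fun s => bkrHead k r m (s, false)).map
        ⟨List.cons (r, true), List.cons_injective⟩ := by
  ext (_ | ⟨p, t⟩)
  · simp [mem_bkrHead]
  simp only [mem_bkrHead, Finset.mem_map, Finset.mem_biUnion, List.head?_cons,
    Option.some.injEq, Function.Embedding.coeFn_mk, List.cons.injEq]
  constructor
  · rintro ⟨hB, rfl⟩
    obtain ⟨hB', s, hs, hh⟩ := (isBkr_overline_cons_iff hr hrk hm).1 hB
    exact ⟨t, ⟨s, hs, hB', hh⟩, rfl, rfl⟩
  · rintro ⟨t, ⟨s, hs, hB, hh⟩, rfl, rfl⟩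
    exact ⟨(isBkr_overline_cons_iff hr hrk hm).2 ⟨hB, s, hs, hh⟩, rfl⟩

open MvPowerSeries in
/-- for m ≥ 1,
g_{k,r}(m+1, overline(r)) = q^r · ∑_{s=1}^{r} g_{k,r}(m, s). -/
theorem stmt13 (k r m : ℕ) (hr : 1 ≤ r) (hrk : r ≤ k) (hm : 1 ≤ m) :
    gkr k r (m + 1) (r, true) =
      (X 2 : S3) ^ r * ∑ s ∈ Finset.Icc 1 r, gkr k r m (s, false) := by
  have hdisj : (Finset.Icc 1 r : Set ℕ).PairwiseDisjoint fun s => bkrHead k r m (s, false) :=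
    fun s _ s' _ hne => disjoint_bkrHead (by simpa using hne)
  rw [gkr_eq_sum, bkrHead_overline_eq hr hrk hm, Finset.sum_map, Finset.sum_biUnion hdisj,
    Finset.mul_sum]
  refine Finset.sum_congr rfl fun s _ => ?_
  simp only [gkr_eq_sum, Finset.mul_sum, Function.Embedding.coeFn_mk, wtL_cons, pow_add]
end
end
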